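/- arXiv:1212.1522 — 9 statements merged into one kernel-verified Lean document; each statement's English description precedes it below -/
import Mathlib

section
/- Fix a player i. Let v̄_k (for k ≠ i) be the valuations reported by the other players, let v_i be player i's true valuation, and let v̄_i be any (possibly false) valuation report of player i; all these functions are nonnegative on nonnegative bundles and homogeneous of degree one. Let x_T be a feasible allocation maximizing v_i(x_i)^{b_i}·Π_{k≠i} v̄_k(x_k)^{b_k} over feasible allocations, let x_L be a feasible allocation maximizing v̄_i(x_i)^{b_i}·Π_{k≠i} v̄_k(x_k)^{b_k} over feasible allocations, and let x*_{-i} be a feasible allocation maximizing Π_{k≠i} v̄_k(x_k)^{b_k}, with D = Π_{k≠i} v̄_k((x*_{-i})_k)^{b_k} > 0. Define f_T = (Π_{k≠i} v̄_k((x_T)_k)^{b_k} / D)^{1/b_i} and f_L = (Π_{k≠i} v̄_k((x_L)_k)^{b_k} / D)^{1/b_i}. Then f_T·v_i((x_T)_i) ≥ f_L·v_i((x_L)_i); that is, the Partial Allocation mechanism is truthful: reporting the true valuation is a dominant strategy for every player. -/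
open Finset

/-- Truthfulness of the Partial Allocation mechanism: reporting the true
valuation is a dominant strategy, i.e. `f_T · v_i((x_T)_i) ≥ f_L · v_i((x_L)_i)`. -/
theorem stmt_1 {n m : ℕ} (i : Fin n)
    (b : Fin n → ℝ) (hb : ∀ k, 1 ≤ b k)
    (vtrue vfalse : (Fin m → ℝ) → ℝ)
    (vbar : Fin n → (Fin m → ℝ) → ℝ)
    (hvtrue_nonneg : ∀ y : Fin m → ℝ, (∀ j, 0 ≤ y j) → 0 ≤ vtrue y)
    (hvtrue_hom : ∀ c : ℝ, 0 ≤ c → ∀ y : Fin m → ℝ, vtrue (c • y) = c * vtrue y)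
    (hvfalse_nonneg : ∀ y : Fin m → ℝ, (∀ j, 0 ≤ y j) → 0 ≤ vfalse y)
    (hvfalse_hom : ∀ c : ℝ, 0 ≤ c → ∀ y : Fin m → ℝ, vfalse (c • y) = c * vfalse y)
    (hvbar_nonneg : ∀ k, k ≠ i → ∀ y : Fin m → ℝ, (∀ j, 0 ≤ y j) → 0 ≤ vbar k y)
    (hvbar_hom : ∀ k, k ≠ i → ∀ c : ℝ, 0 ≤ c → ∀ y : Fin m → ℝ, vbar k (c • y) = c * vbar k y)
    -- x_T : PF allocation when player i reports her true valuation
    (xT : Fin n → Fin m → ℝ)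
    (hxT_nonneg : ∀ k j, 0 ≤ xT k j) (hxT_feas : ∀ j, ∑ k, xT k j ≤ 1)
    (hxT_max : ∀ x : Fin n → Fin m → ℝ,
      (∀ k j, 0 ≤ x k j) → (∀ j, ∑ k, x k j ≤ 1) →
      vtrue (x i) ^ b i * ∏ k ∈ univ.erase i, vbar k (x k) ^ b k
        ≤ vtrue (xT i) ^ b i * ∏ k ∈ univ.erase i, vbar k (xT k) ^ b k)
    -- x_L : PF allocation when player i reports the false valuation
    (xL : Fin n → Fin m → ℝ)
    (hxL_nonneg : ∀ k j, 0 ≤ xL k j) (hxL_feas : ∀ j, ∑ k, xL k j ≤ 1)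
    (hxL_max : ∀ x : Fin n → Fin m → ℝ,
      (∀ k j, 0 ≤ x k j) → (∀ j, ∑ k, x k j ≤ 1) →
      vfalse (x i) ^ b i * ∏ k ∈ univ.erase i, vbar k (x k) ^ b k
        ≤ vfalse (xL i) ^ b i * ∏ k ∈ univ.erase i, vbar k (xL k) ^ b k)
    -- x*_{-i} : PF allocation in player i's absence
    (xmi : Fin n → Fin m → ℝ)
    (hxmi_nonneg : ∀ k j, 0 ≤ xmi k j) (hxmi_feas : ∀ j, ∑ k, xmi k j ≤ 1)
    (hxmi_max : ∀ x : Fin n → Fin m → ℝ,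
      (∀ k j, 0 ≤ x k j) → (∀ j, ∑ k, x k j ≤ 1) →
      ∏ k ∈ univ.erase i, vbar k (x k) ^ b k ≤ ∏ k ∈ univ.erase i, vbar k (xmi k) ^ b k)
    (hD : 0 < ∏ k ∈ univ.erase i, vbar k (xmi k) ^ b k) :
    (((∏ k ∈ univ.erase i, vbar k (xL k) ^ b k) /
        (∏ k ∈ univ.erase i, vbar k (xmi k) ^ b k)) ^ (1 / b i)) * vtrue (xL i)
    ≤ (((∏ k ∈ univ.erase i, vbar k (xT k) ^ b k) /
        (∏ k ∈ univ.erase i, vbar k (xmi k) ^ b k)) ^ (1 / b i)) * vtrue (xT i) := by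

  have hbi : 0 < b i := lt_of_lt_of_le one_pos (hb i)
  set D := ∏ k ∈ univ.erase i, vbar k (xmi k) ^ b k with hDdef
  set PT := ∏ k ∈ univ.erase i, vbar k (xT k) ^ b k with hPT
  set PL := ∏ k ∈ univ.erase i, vbar k (xL k) ^ b k with hPL
  have hPTn : 0 ≤ PT := Finset.prod_nonneg fun k hk =>
    Real.rpow_nonneg (hvbar_nonneg k (Finset.ne_of_mem_erase hk) _ (hxT_nonneg k)) _
  have hPLn : 0 ≤ PL := Finset.prod_nonneg fun k hk =>
    Real.rpow_nonneg (hvbar_nonneg k (Finset.ne_of_mem_erase hk) _ (hxL_nonneg k)) _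
  have hvT : 0 ≤ vtrue (xT i) := hvtrue_nonneg _ (hxT_nonneg i)
  have hvL : 0 ≤ vtrue (xL i) := hvtrue_nonneg _ (hxL_nonneg i)
  have key : vtrue (xL i) ^ b i * PL ≤ vtrue (xT i) ^ b i * PT :=
    hxT_max xL hxL_nonneg hxL_feas
  have key2 : (vtrue (xL i) ^ b i * PL) ^ (1 / b i)
      ≤ (vtrue (xT i) ^ b i * PT) ^ (1 / b i) :=
    Real.rpow_le_rpow (mul_nonneg (Real.rpow_nonneg hvL _) hPLn) key
      (by positivity)
  have expand : ∀ v P : ℝ, 0 ≤ v → 0 ≤ P →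
      (v ^ b i * P) ^ (1 / b i) = v * P ^ (1 / b i) := by
    intro v P hv hP
    rw [Real.mul_rpow (Real.rpow_nonneg hv _) hP, ← Real.rpow_mul hv,
      mul_one_div, div_self hbi.ne', Real.rpow_one]
  rw [expand _ _ hvL hPLn, expand _ _ hvT hPTn] at key2
  have hDr : 0 < D ^ (1 / b i) := Real.rpow_pos_of_pos hD _
  rw [Real.div_rpow hPLn hD.le, Real.div_rpow hPTn hD.le]
  rw [div_mul_eq_mul_div, div_mul_eq_mul_div, div_le_div_iff_of_pos_right hDr]
  linarith [key2]
end

section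
/- Let x* be a feasible allocation maximizing Π_k v_k(x_k)^{b_k} over all feasible allocations, and for player i let x*_{-i} be a feasible allocation maximizing Π_{k≠i} v_k(x_k)^{b_k}. Assume each v_k is concave, that v_k(x*_k) > 0 for all k and v_k((x*_{-i})_k) > 0 for all k ≠ i, and that v_i(0) = 0. Let B_{-i} = Σ_{k≠i} b_k > 0. Then the Partial Allocation fraction f_i = (Π_{k≠i} v_k(x*_k)^{b_k} / Π_{k≠i} v_k((x*_{-i})_k)^{b_k})^{1/b_i} satisfies f_i ≥ (1 + b_i/B_{-i})^{-B_{-i}/b_i}; hence player i's value f_i·v_i(x*_i) for her Partial Allocation bundle is at least (1 + b_i/B_{-i})^{-B_{-i}/b_i} · v_i(x*_i). -/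
/-!
Let `y` be `x*₋ᵢ` with player `i`'s bundle emptied; `y` is still feasible. As `x*` maximizes the
weighted Nash product and every `v k` is concave, moving from `x*` a small step `t` towards `y`
cannot increase `∑ₖ b k * log v k`; differentiating at `t = 0` gives the first-order condition
`∑ₖ b k * v k (y k) / v k (x*ₖ) ≤ ∑ₖ b k`. Player `i` contributes `0` on the left, so the ratios
`ρ k = v k (x*₋ᵢ k) / v k (x* k)` satisfy `∑_{k ≠ i} b k * ρ k ≤ B₋ᵢ + b i`, and weighted AM-GM
bounds `∏_{k ≠ i} ρ k ^ b k = f_i ^ (-b i)` by `(1 + b i / B₋ᵢ) ^ B₋ᵢ`.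
-/

open Finset Filter Topology Real

theorem sum_mul_nonpos_of_eventually_sum_mul_log_one_add_mul_nonpos {ι : Type*} (s : Finset ι)
    (b a : ι → ℝ) (h : ∀ᶠ t in 𝓝[>] (0 : ℝ), ∑ k ∈ s, b k * log (1 + t * a k) ≤ 0) :
    ∑ k ∈ s, b k * a k ≤ 0 := by
  set g : ℝ → ℝ := fun t => ∑ k ∈ s, b k * log (1 + t * a k)
  have hg : HasDerivAt g (∑ k ∈ s, b k * a k) 0 := by
    refine HasDerivAt.fun_sum fun k _ => ?_
    simpa using ((((hasDerivAt_id (0 : ℝ)).mul_const (a k)).const_add 1).log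
      (by simp)).const_mul (b k)
  refine le_of_tendsto ((hasDerivAt_iff_tendsto_slope.mp hg).mono_left (nhdsGT_le_nhdsNE 0)) ?_
  filter_upwards [h, self_mem_nhdsWithin] with t ht ht0
  simpa [slope_def_field, g] using div_nonpos_of_nonpos_of_nonneg ht (le_of_lt ht0)

theorem sum_mul_log_nonpos_of_prod_rpow_le_one {ι : Type*} {s : Finset ι} {b c : ι → ℝ}
    (hc : ∀ k ∈ s, 0 < c k) (h : ∏ k ∈ s, c k ^ b k ≤ 1) :
    ∑ k ∈ s, b k * log (c k) ≤ 0 := by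
  have hlog : log (∏ k ∈ s, c k ^ b k) = ∑ k ∈ s, b k * log (c k) := by
    rw [log_prod fun k hk => (rpow_pos_of_pos (hc k hk) _).ne']
    exact sum_congr rfl fun k hk => log_rpow (hc k hk) _
  exact hlog ▸ log_nonpos (prod_nonneg fun k hk => (rpow_pos_of_pos (hc k hk) _).le) h

theorem sum_mul_div_le_sum_of_isMaxOn_prod_rpow {E ι : Type*} [AddCommGroup E] [Module ℝ E]
    {S : Set E} (hS : Convex ℝ S) {s : Finset ι} {b : ι → ℝ} (hb : ∀ k ∈ s, 0 ≤ b k)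
    {φ : ι → E → ℝ} (hφ : ∀ k ∈ s, ConcaveOn ℝ S (φ k)) {x y : E} (hx : x ∈ S) (hy : y ∈ S)
    (hmax : IsMaxOn (fun z => ∏ k ∈ s, φ k z ^ b k) S x)
    (hx_pos : ∀ k ∈ s, 0 < φ k x) (hy_nonneg : ∀ k ∈ s, 0 ≤ φ k y) :
    ∑ k ∈ s, b k * (φ k y / φ k x) ≤ ∑ k ∈ s, b k := by
  suffices ∑ k ∈ s, b k * (φ k y / φ k x - 1) ≤ 0 by
    simpa [mul_sub, sum_sub_distrib] using this
  refine sum_mul_nonpos_of_eventually_sum_mul_log_one_add_mul_nonpos s b _ ?_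
  filter_upwards [Ioo_mem_nhdsGT one_pos] with t ⟨ht0, ht1⟩
  have hinterp : ∀ k ∈ s, (1 - t) * φ k x + t * φ k y = φ k x * (1 + t * (φ k y / φ k x - 1)) :=
    fun k hk => by field_simp [(hx_pos k hk).ne']; ring
  have hfac_pos : ∀ k ∈ s, 0 < 1 + t * (φ k y / φ k x - 1) := fun k hk => by
    have := div_nonneg (hy_nonneg k hk) (hx_pos k hk).le
    nlinarith
  have hconc : ∀ k ∈ s, φ k x * (1 + t * (φ k y / φ k x - 1)) ≤ φ k ((1 - t) • x + t • y) :=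
    fun k hk => hinterp k hk ▸ by
      simpa using (hφ k hk).2 hx hy (sub_nonneg.2 ht1.le) ht0.le (sub_add_cancel 1 t)
  refine sum_mul_log_nonpos_of_prod_rpow_le_one hfac_pos ?_
  have hP : 0 < ∏ k ∈ s, φ k x ^ b k := prod_pos fun k hk => rpow_pos_of_pos (hx_pos k hk) _
  refine (mul_le_iff_le_one_right hP).1 ?_
  calc (∏ k ∈ s, φ k x ^ b k) * ∏ k ∈ s, (1 + t * (φ k y / φ k x - 1)) ^ b k
      = ∏ k ∈ s, (φ k x * (1 + t * (φ k y / φ k x - 1))) ^ b k := by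
        rw [← prod_mul_distrib]
        exact prod_congr rfl fun k hk => (mul_rpow (hx_pos k hk).le (hfac_pos k hk).le).symm
    _ ≤ ∏ k ∈ s, φ k ((1 - t) • x + t • y) ^ b k :=
        prod_le_prod (fun k hk => rpow_nonneg (mul_pos (hx_pos k hk) (hfac_pos k hk)).le _)
          fun k hk => rpow_le_rpow (mul_pos (hx_pos k hk) (hfac_pos k hk)).le (hconc k hk) (hb k hk)
    _ ≤ ∏ k ∈ s, φ k x ^ b k := hmax (hS hx hy (sub_nonneg.2 ht1.le) ht0.le (sub_add_cancel 1 t))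

def feasibleAllocations (ι κ : Type*) [Fintype ι] : Set (ι → κ → ℝ) :=
  {x | (∀ k j, 0 ≤ x k j) ∧ ∀ j, ∑ k, x k j ≤ 1}

section Allocations

variable {ι κ : Type*} [Fintype ι]

theorem convex_feasibleAllocations : Convex ℝ (feasibleAllocations ι κ) := by
  rintro x ⟨hx0, hx1⟩ y ⟨hy0, hy1⟩ s t hs ht hst
  refine ⟨fun k j => ?_, fun j => ?_⟩
  · simp only [Pi.add_apply, Pi.smul_apply, smul_eq_mul]
    exact add_nonneg (mul_nonneg hs (hx0 k j)) (mul_nonneg ht (hy0 k j))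
  · simp only [Pi.add_apply, Pi.smul_apply, smul_eq_mul, sum_add_distrib, ← mul_sum]
    nlinarith [hx1 j, hy1 j]

theorem update_zero_mem_feasibleAllocations [DecidableEq ι] {x : ι → κ → ℝ}
    (hx : x ∈ feasibleAllocations ι κ) (i : ι) :
    Function.update x i 0 ∈ feasibleAllocations ι κ := by
  have hle : ∀ k j, Function.update x i 0 k j ≤ x k j := fun k j => by
    rcases eq_or_ne k i with rfl | hk
    · simpa using hx.1 k j
    · simp [hk]
  refine ⟨fun k j => ?_, fun j => (sum_le_sum fun k _ => hle k j).trans (hx.2 j)⟩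
  rcases eq_or_ne k i with rfl | hk
  · simp
  · simpa [hk] using hx.1 k j

noncomputable def nashWelfare (v : ι → (κ → ℝ) → ℝ) (b : ι → ℝ) (x : ι → κ → ℝ) : ℝ :=
  ∏ k, v k (x k) ^ b k

theorem sum_erase_mul_div_le_sum_of_isMaxOn_nashWelfare [DecidableEq ι]
    {v : ι → (κ → ℝ) → ℝ} {b : ι → ℝ} (hb : ∀ k, 0 ≤ b k)
    (hv_nonneg : ∀ k (y : κ → ℝ), (∀ j, 0 ≤ y j) → 0 ≤ v k y)
    (hv_concave : ∀ k, ConcaveOn ℝ Set.univ (v k)) {i : ι} (hvi_zero : v i 0 = 0)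
    {x y : ι → κ → ℝ} (hx : x ∈ feasibleAllocations ι κ) (hy : y ∈ feasibleAllocations ι κ)
    (hmax : IsMaxOn (nashWelfare v b) (feasibleAllocations ι κ) x) (hpos : ∀ k, 0 < v k (x k)) :
    ∑ k ∈ univ.erase i, b k * (v k (y k) / v k (x k)) ≤ ∑ k, b k := by
  have hy' := update_zero_mem_feasibleAllocations hy i
  have h := sum_mul_div_le_sum_of_isMaxOn_prod_rpow convex_feasibleAllocations
    (fun k _ => hb k) (φ := fun k x => v k (x k))
    (fun k _ => ((hv_concave k).comp_linearMap (LinearMap.proj k)).subset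
      (Set.subset_univ _) convex_feasibleAllocations)
    hx hy' hmax (fun k _ => hpos k) (fun k _ => hv_nonneg k _ (hy'.1 k))
  rw [← sum_erase_add _ _ (mem_univ i)] at h
  have hupdate : ∀ k ∈ univ.erase i,
      b k * (v k (Function.update y i 0 k) / v k (x k)) = b k * (v k (y k) / v k (x k)) :=
    fun k hk => by rw [Function.update_of_ne (ne_of_mem_erase hk)]
  simpa only [sum_congr rfl hupdate, Function.update_self, hvi_zero, zero_div, mul_zero,
    add_zero] using h

end Allocations

theorem rpow_neg_div_le_inv_rpow_of_rpow_inv_le {r c B β : ℝ} (hr : 0 < r) (hB : 0 < B)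
    (h : r ^ B⁻¹ ≤ c) (hβ : 0 ≤ β) :
    c ^ (-(B / β)) ≤ r⁻¹ ^ (1 / β) := by
  have hexp : r⁻¹ ^ (1 / β) = (r ^ B⁻¹) ^ (-(B / β)) := by
    rw [← rpow_mul hr.le, inv_rpow hr.le, ← rpow_neg hr.le]
    congr 1
    field_simp
  rw [hexp]
  exact rpow_le_rpow_of_nonpos (rpow_pos_of_pos hr _) h (neg_nonpos.2 (div_nonneg hB.le hβ))

theorem stmt_3_general {n m : ℕ} (i : Fin n)
    (v : Fin n → (Fin m → ℝ) → ℝ) (b : Fin n → ℝ)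
    (hb : ∀ k, 1 ≤ b k)
    (hv_nonneg : ∀ k (y : Fin m → ℝ), (∀ j, 0 ≤ y j) → 0 ≤ v k y)
    (hv_concave : ∀ k, ConcaveOn ℝ Set.univ (v k))
    (hvi_zero : v i 0 = 0)
    (xstar : Fin n → Fin m → ℝ)
    (hxstar_nonneg : ∀ k j, 0 ≤ xstar k j) (hxstar_feas : ∀ j, ∑ k, xstar k j ≤ 1)
    (hxstar_max : ∀ x : Fin n → Fin m → ℝ,
      (∀ k j, 0 ≤ x k j) → (∀ j, ∑ k, x k j ≤ 1) →
      ∏ k, v k (x k) ^ b k ≤ ∏ k, v k (xstar k) ^ b k)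
    (xmi : Fin n → Fin m → ℝ)
    (hxmi_nonneg : ∀ k j, 0 ≤ xmi k j) (hxmi_feas : ∀ j, ∑ k, xmi k j ≤ 1)
    (hpos : ∀ k, 0 < v k (xstar k))
    (hpos' : ∀ k ∈ univ.erase i, 0 < v k (xmi k))
    (hBmi : 0 < ∑ k ∈ univ.erase i, b k) :
    (1 + b i / ∑ k ∈ univ.erase i, b k) ^ (-((∑ k ∈ univ.erase i, b k) / b i))
      ≤ ((∏ k ∈ univ.erase i, v k (xstar k) ^ b k) /
          (∏ k ∈ univ.erase i, v k (xmi k) ^ b k)) ^ (1 / b i) ∧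
    ((1 + b i / ∑ k ∈ univ.erase i, b k) ^ (-((∑ k ∈ univ.erase i, b k) / b i)))
        * v i (xstar i)
      ≤ (((∏ k ∈ univ.erase i, v k (xstar k) ^ b k) /
          (∏ k ∈ univ.erase i, v k (xmi k) ^ b k)) ^ (1 / b i)) * v i (xstar i) := by
  set B := ∑ k ∈ univ.erase i, b k
  set ρ : Fin n → ℝ := fun k => v k (xmi k) / v k (xstar k)
  have hb0 : ∀ k, 0 ≤ b k := fun k => zero_le_one.trans (hb k)
  have hρ : ∀ k, 0 ≤ ρ k := fun k => div_nonneg (hv_nonneg _ _ (hxmi_nonneg k)) (hpos k).le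
  have hfoc : ∑ k ∈ univ.erase i, b k * ρ k ≤ B + b i := by
    rw [sum_erase_add _ _ (mem_univ i)]
    exact sum_erase_mul_div_le_sum_of_isMaxOn_nashWelfare hb0 hv_nonneg hv_concave hvi_zero
      ⟨hxstar_nonneg, hxstar_feas⟩ ⟨hxmi_nonneg, hxmi_feas⟩
      (fun x hx => hxstar_max x hx.1 hx.2) hpos
  have hamgm : (∏ k ∈ univ.erase i, ρ k ^ b k) ^ B⁻¹ ≤ 1 + b i / B := by
    refine (geom_mean_le_arith_mean _ _ _ (fun k _ => hb0 k) hBmi (fun k _ => hρ k)).trans ?_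
    rw [div_le_iff₀ hBmi, add_mul, div_mul_cancel₀ _ hBmi.ne']
    linarith
  have hratio : ∏ k ∈ univ.erase i, ρ k ^ b k
      = (∏ k ∈ univ.erase i, v k (xmi k) ^ b k) / ∏ k ∈ univ.erase i, v k (xstar k) ^ b k := by
    rw [← prod_div_distrib]
    exact prod_congr rfl fun k _ => div_rpow (hv_nonneg _ _ (hxmi_nonneg k)) (hpos k).le _
  have hQP : 0 < (∏ k ∈ univ.erase i, v k (xmi k) ^ b k) /
      ∏ k ∈ univ.erase i, v k (xstar k) ^ b k :=
    div_pos (prod_pos fun k hk => rpow_pos_of_pos (hpos' k hk) _)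
      (prod_pos fun k _ => rpow_pos_of_pos (hpos k) _)
  have main := rpow_neg_div_le_inv_rpow_of_rpow_inv_le hQP hBmi (hratio ▸ hamgm) (hb0 i)
  rw [inv_div] at main
  exact ⟨main, mul_le_mul_of_nonneg_right main (hv_nonneg i _ (hxstar_nonneg i))⟩

/-- The Partial Allocation fraction of player `i` satisfies
`f_i ≥ (1 + b_i/B_{-i})^{-B_{-i}/b_i}`, and hence her value for her Partial Allocation
bundle is at least that factor times her Proportionally Fair value. -/
theorem stmt_3 {n m : ℕ} (hn : 2 ≤ n) (i : Fin n)
    (v : Fin n → (Fin m → ℝ) → ℝ) (b : Fin n → ℝ)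
    (hb : ∀ k, 1 ≤ b k)
    (hv_nonneg : ∀ k (y : Fin m → ℝ), (∀ j, 0 ≤ y j) → 0 ≤ v k y)
    (hv_hom : ∀ k (c : ℝ), 0 ≤ c → ∀ y : Fin m → ℝ, v k (c • y) = c * v k y)
    (hv_concave : ∀ k, ConcaveOn ℝ Set.univ (v k))
    (hvi_zero : v i 0 = 0)
    (xstar : Fin n → Fin m → ℝ)
    (hxstar_nonneg : ∀ k j, 0 ≤ xstar k j) (hxstar_feas : ∀ j, ∑ k, xstar k j ≤ 1)
    (hxstar_max : ∀ x : Fin n → Fin m → ℝ,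
      (∀ k j, 0 ≤ x k j) → (∀ j, ∑ k, x k j ≤ 1) →
      ∏ k, v k (x k) ^ b k ≤ ∏ k, v k (xstar k) ^ b k)
    (xmi : Fin n → Fin m → ℝ)
    (hxmi_nonneg : ∀ k j, 0 ≤ xmi k j) (hxmi_feas : ∀ j, ∑ k, xmi k j ≤ 1)
    (hxmi_max : ∀ x : Fin n → Fin m → ℝ,
      (∀ k j, 0 ≤ x k j) → (∀ j, ∑ k, x k j ≤ 1) →
      ∏ k ∈ univ.erase i, v k (x k) ^ b k ≤ ∏ k ∈ univ.erase i, v k (xmi k) ^ b k)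
    (hpos : ∀ k, 0 < v k (xstar k))
    (hpos' : ∀ k ∈ univ.erase i, 0 < v k (xmi k))
    (hBmi : 0 < ∑ k ∈ univ.erase i, b k) :
    (1 + b i / ∑ k ∈ univ.erase i, b k) ^ (-((∑ k ∈ univ.erase i, b k) / b i))
      ≤ ((∏ k ∈ univ.erase i, v k (xstar k) ^ b k) /
          (∏ k ∈ univ.erase i, v k (xmi k) ^ b k)) ^ (1 / b i) ∧
    ((1 + b i / ∑ k ∈ univ.erase i, b k) ^ (-((∑ k ∈ univ.erase i, b k) / b i)))
        * v i (xstar i)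
      ≤ (((∏ k ∈ univ.erase i, v k (xstar k) ^ b k) /
          (∏ k ∈ univ.erase i, v k (xmi k) ^ b k)) ^ (1 / b i)) * v i (xstar i) :=
  stmt_3_general i v b hb hv_nonneg hv_concave hvi_zero xstar hxstar_nonneg hxstar_feas hxstar_max
    xmi hxmi_nonneg hxmi_feas hpos hpos' hBmi
end

section
/- Consider a single divisible item (m = 1) and n ≥ 2 players with weights b_i ≥ 1 and valuations v_i(x) = x (each player's value is the fraction of the item she receives). Let B = Σ_k b_k and for each i let B_{-i} = B − b_i. Then: (a) the allocation x*_i = b_i/B maximizes Π_i x_i^{b_i} over all x with x_i ≥ 0 and Σ_i x_i ≤ 1, and for each i the allocation (x*_{-i})_k = b_k/B_{-i} (for k ≠ i) maximizes Π_{k≠i} x_k^{b_k}; (b) the resulting Partial Allocation fraction satisfies f_i = (Π_{k≠i} (b_k/B)^{b_k} / Π_{k≠i} (b_k/B_{-i})^{b_k})^{1/b_i} = (1 + b_i/B_{-i})^{-B_{-i}/b_i} exactly. Hence the approximation bound (1 + b_i/B_{-i})^{-B_{-i}/b_i} of the Partial Allocation mechanism is tight. -/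
/-!
Put `w i = b i / B` with `B = ∑ b`. Weighted AM-GM applied to the ratios `x i / w i` gives
`∏ (x i / w i) ^ w i ≤ ∑ x i ≤ 1`; raising to the power `B` shows `∏ x i ^ b i ≤ ∏ w i ^ b i`.
For the Partial Allocation fraction, each factor of the ratio of the two optimal Nash products
is `(B₋ᵢ / B) ^ b k`, so the ratio is `(B₋ᵢ / B) ^ B₋ᵢ`, and `B / B₋ᵢ = 1 + b i / B₋ᵢ`.
-/

open Finset Real

theorem prod_rpow_le_prod_div_sum_rpow {ι : Type*} (s : Finset ι) {b x : ι → ℝ}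
    (hb : ∀ i ∈ s, 0 < b i) (hx : ∀ i ∈ s, 0 ≤ x i) (hsum : ∑ i ∈ s, x i ≤ 1) :
    ∏ i ∈ s, x i ^ b i ≤ ∏ i ∈ s, (b i / ∑ k ∈ s, b k) ^ b i := by
  rcases s.eq_empty_or_nonempty with rfl | hs
  · simp
  set B := ∑ k ∈ s, b k
  have hB : 0 < B := sum_pos hb hs
  have hw : ∀ i ∈ s, 0 < b i / B := fun i hi => div_pos (hb i hi) hB
  have hw_sum : ∑ i ∈ s, b i / B = 1 := by rw [← sum_div, div_self hB.ne']
  have hz : ∀ i ∈ s, 0 ≤ x i / (b i / B) := fun i hi => div_nonneg (hx i hi) (hw i hi).le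
  have amgm : ∏ i ∈ s, (x i / (b i / B)) ^ (b i / B) ≤ 1 := calc
    _ ≤ ∑ i ∈ s, b i / B * (x i / (b i / B)) :=
      geom_mean_le_arith_mean_weighted s _ _ (fun i hi => (hw i hi).le) hw_sum hz
    _ = ∑ i ∈ s, x i := sum_congr rfl fun i hi => mul_div_cancel₀ _ (hw i hi).ne'
    _ ≤ 1 := hsum
  have factor : ∀ i ∈ s,
      x i ^ b i = ((x i / (b i / B)) ^ (b i / B)) ^ B * (b i / B) ^ b i := by
    intro i hi
    rw [← rpow_mul (hz i hi), div_mul_cancel₀ _ hB.ne', ← mul_rpow (hz i hi) (hw i hi).le,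
      div_mul_cancel₀ _ (hw i hi).ne']
  calc ∏ i ∈ s, x i ^ b i
      = (∏ i ∈ s, (x i / (b i / B)) ^ (b i / B)) ^ B * ∏ i ∈ s, (b i / B) ^ b i := by
        rw [prod_congr rfl factor, prod_mul_distrib,
          finsetProd_rpow s _ (fun i hi => rpow_nonneg (hz i hi) _)]
    _ ≤ 1 * ∏ i ∈ s, (b i / B) ^ b i := by
        gcongr
        · exact prod_nonneg fun i hi => rpow_nonneg (hw i hi).le _
        · exact rpow_le_one (prod_nonneg fun i hi => rpow_nonneg (hz i hi) _) amgm hB.le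
    _ = ∏ i ∈ s, (b i / B) ^ b i := one_mul _

theorem prod_div_rpow_div_prod_div_sum_rpow {ι : Type*} (s : Finset ι) {b : ι → ℝ}
    (hb : ∀ i ∈ s, 0 < b i) {B : ℝ} (hB : 0 < B) :
    (∏ k ∈ s, (b k / B) ^ b k) / ∏ k ∈ s, (b k / ∑ l ∈ s, b l) ^ b k
      = ((∑ l ∈ s, b l) / B) ^ ∑ l ∈ s, b l := by
  rw [← prod_div_distrib, rpow_sum_of_nonneg
    (div_nonneg (sum_nonneg fun k hk => (hb k hk).le) hB.le) fun k hk => (hb k hk).le]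
  refine prod_congr rfl fun k hk => ?_
  have hC : 0 < ∑ l ∈ s, b l := (hb k hk).trans_le <|
    single_le_sum (fun l hl => (hb l hl).le) hk
  rw [← div_rpow (div_nonneg (hb k hk).le hB.le) (div_nonneg (hb k hk).le hC.le),
    div_div_div_cancel_left' _ _ (hb k hk).ne']

theorem sub_div_rpow_rpow_one_div {a B : ℝ} (ha : 0 < a) (haB : a ≤ B) :
    (((B - a) / B) ^ (B - a)) ^ (1 / a) = (1 + a / (B - a)) ^ (-((B - a) / a)) := by
  rcases (sub_nonneg.2 haB).eq_or_lt with hC | hC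
  · simp [← hC]
  have hB : 0 < B := ha.trans_le haB
  have hsum : 1 + a / (B - a) = B / (B - a) := by field_simp; ring
  rw [← rpow_mul (by positivity), mul_one_div, hsum, rpow_neg (by positivity),
    ← inv_rpow (by positivity), inv_div]

theorem stmt_4_general {n : ℕ}
    (b : Fin n → ℝ) (hb : ∀ i, 1 ≤ b i) :
    (∀ x : Fin n → ℝ, (∀ i, 0 ≤ x i) → (∑ i, x i ≤ 1) →
      ∏ i, x i ^ b i ≤ ∏ i, (b i / ∑ k, b k) ^ b i) ∧
    (∀ i : Fin n, ∀ x : Fin n → ℝ, (∀ k, 0 ≤ x k) → (∑ k ∈ univ.erase i, x k ≤ 1) →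
      ∏ k ∈ univ.erase i, x k ^ b k
        ≤ ∏ k ∈ univ.erase i, (b k / ((∑ l, b l) - b i)) ^ b k) ∧
    (∀ i : Fin n,
      ((∏ k ∈ univ.erase i, (b k / ∑ l, b l) ^ b k) /
        (∏ k ∈ univ.erase i, (b k / ((∑ l, b l) - b i)) ^ b k)) ^ (1 / b i)
      = (1 + b i / ((∑ l, b l) - b i)) ^ (-(((∑ l, b l) - b i) / b i))) := by
  have hbpos : ∀ i, 0 < b i := fun i => one_pos.trans_le (hb i)
  have hsum_erase : ∀ i, ∑ k ∈ univ.erase i, b k = (∑ l, b l) - b i := fun i =>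
    sum_erase_eq_sub (mem_univ i)
  refine ⟨fun x hx hsum => ?_, fun i x hx hsum => ?_, fun i => ?_⟩
  · exact prod_rpow_le_prod_div_sum_rpow univ (fun i _ => hbpos i) (fun i _ => hx i) hsum
  · simpa only [hsum_erase] using prod_rpow_le_prod_div_sum_rpow (univ.erase i)
      (fun k _ => hbpos k) (fun k _ => hx k) hsum
  · have hbB : b i ≤ ∑ l, b l := single_le_sum (fun l _ => (hbpos l).le) (mem_univ i)
    rw [← hsum_erase, prod_div_rpow_div_prod_div_sum_rpow _ (fun k _ => hbpos k)
      ((hbpos i).trans_le hbB), hsum_erase]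
    exact sub_div_rpow_rpow_one_div (hbpos i) hbB

/-- Tightness of the Partial Allocation bound for a single item:
(a) the proportional allocations `b_i/B` (resp. `b_k/B_{-i}`) maximize the weighted Nash
products over feasible single-item allocations; (b) the resulting fraction `f_i` equals
`(1 + b_i/B_{-i})^{-B_{-i}/b_i}` exactly. -/
theorem stmt_4 {n : ℕ} (hn : 2 ≤ n)
    (b : Fin n → ℝ) (hb : ∀ i, 1 ≤ b i) :
    (∀ x : Fin n → ℝ, (∀ i, 0 ≤ x i) → (∑ i, x i ≤ 1) →
      ∏ i, x i ^ b i ≤ ∏ i, (b i / ∑ k, b k) ^ b i) ∧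
    (∀ i : Fin n, ∀ x : Fin n → ℝ, (∀ k, 0 ≤ x k) → (∑ k ∈ univ.erase i, x k ≤ 1) →
      ∏ k ∈ univ.erase i, x k ^ b k
        ≤ ∏ k ∈ univ.erase i, (b k / ((∑ l, b l) - b i)) ^ b k) ∧
    (∀ i : Fin n,
      ((∏ k ∈ univ.erase i, (b k / ∑ l, b l) ^ b k) /
        (∏ k ∈ univ.erase i, (b k / ((∑ l, b l) - b i)) ^ b k)) ^ (1 / b i)
      = (1 + b i / ((∑ l, b l) - b i)) ^ (-(((∑ l, b l) - b i) / b i))) :=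
  stmt_4_general b hb
end

section
/- Let x* be a feasible allocation maximizing Π_k v_k(x_k)^{b_k} over all feasible allocations, and for each player i let x*_{-i} be a feasible allocation maximizing Π_{k≠i} v_k(x_k)^{b_k}. Assume each v_k is concave, v_k(x*_k) > 0 for all k, v_k((x*_{-i})_k) > 0 for all k ≠ i, and v_i(0) = 0 for all i. Then the allocation x produced by the Partial Allocation mechanism, which gives player i the bundle f_i·x*_i with f_i = (Π_{k≠i} v_k(x*_k)^{b_k} / Π_{k≠i} v_k((x*_{-i})_k)^{b_k})^{1/b_i}, satisfies v_i(x_i) ≥ (1/e)·v_i(x*_i) for every player i, where e is Euler's number. -/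
/-!
Fix a player `i` and `t ∈ (0, 1)`. Shrinking `x*_i` to `(1 - t) x*_i` while moving every other
player towards `x*_{-i}` gives a feasible allocation; by concavity and the weighted AM-GM inequality
the other players' weighted product is at least `P ^ (1 - t) * Q ^ t`, where `P` and `Q` are the
products over `k ≠ i` at `x*` and at `x*_{-i}`. Optimality of `x*` then yields
`(1 - t) ^ b_i ≤ (P / Q) ^ t` for all `t`, and the best choice of `t` gives `P / Q ≥ exp (-b_i)`,
i.e. `f_i ≥ 1 / e`.
-/

open Finset

def IsFeasibleAllocation {ι α : Type*} [Fintype ι] (x : ι → α → ℝ) : Prop :=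
  (∀ k j, 0 ≤ x k j) ∧ ∀ j, ∑ k, x k j ≤ 1

section Allocation

variable {ι α : Type*} [Fintype ι]

theorem convex_setOf_isFeasibleAllocation :
    Convex ℝ {x : ι → α → ℝ | IsFeasibleAllocation x} := by
  rintro x ⟨hx_nonneg, hx_feas⟩ y ⟨hy_nonneg, hy_feas⟩ a c ha hc hac
  refine ⟨fun k j => ?_, fun j => ?_⟩
  · simp only [Pi.add_apply, Pi.smul_apply, smul_eq_mul]
    exact add_nonneg (mul_nonneg ha (hx_nonneg k j)) (mul_nonneg hc (hy_nonneg k j))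
  · simp only [Pi.add_apply, Pi.smul_apply, smul_eq_mul, sum_add_distrib, ← mul_sum]
    nlinarith [hx_feas j, hy_feas j]

theorem IsFeasibleAllocation.update_zero [DecidableEq ι] {x : ι → α → ℝ}
    (hx : IsFeasibleAllocation x) (i : ι) : IsFeasibleAllocation (Function.update x i 0) := by
  have hle : ∀ k j, Function.update x i 0 k j ≤ x k j := fun k j => by
    rcases eq_or_ne k i with rfl | hk
    · simpa using hx.1 k j
    · simp [hk]
  refine ⟨fun k j => ?_, fun j => (sum_le_sum fun k _ => hle k j).trans (hx.2 j)⟩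
  rcases eq_or_ne k i with rfl | hk
  · simp
  · simpa [hk] using hx.1 k j

end Allocation

theorem ConcaveOn.rpow_one_sub_mul_rpow_le {E : Type*} [AddCommGroup E] [Module ℝ E]
    {s : Set E} {f : E → ℝ} (hf : ConcaveOn ℝ s f) {x y : E} (hxs : x ∈ s) (hys : y ∈ s)
    (hx : 0 ≤ f x) (hy : 0 ≤ f y) {t : ℝ} (ht0 : 0 ≤ t) (ht1 : t ≤ 1) :
    f x ^ (1 - t) * f y ^ t ≤ f ((1 - t) • x + t • y) :=
  calc f x ^ (1 - t) * f y ^ t ≤ (1 - t) * f x + t * f y :=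
        Real.geom_mean_le_arith_mean2_weighted (by linarith) ht0 hx hy (by ring)
    _ ≤ f ((1 - t) • x + t • y) :=
        hf.2 hxs hys (by linarith) ht0 (by ring)

theorem prod_rpow_one_sub_mul_prod_rpow_le {ι E : Type*} [AddCommGroup E] [Module ℝ E]
    (s : Finset ι) {v : ι → E → ℝ} (hv : ∀ k ∈ s, ConcaveOn ℝ Set.univ (v k)) {b : ι → ℝ}
    (hb : ∀ k ∈ s, 0 ≤ b k) {x y : ι → E} (hx : ∀ k ∈ s, 0 ≤ v k (x k))
    (hy : ∀ k ∈ s, 0 ≤ v k (y k)) {t : ℝ} (ht0 : 0 ≤ t) (ht1 : t ≤ 1) :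
    (∏ k ∈ s, v k (x k) ^ b k) ^ (1 - t) * (∏ k ∈ s, v k (y k) ^ b k) ^ t ≤
      ∏ k ∈ s, v k ((1 - t) • x k + t • y k) ^ b k := by
  rw [← Real.finsetProd_rpow s _ fun k hk => Real.rpow_nonneg (hx k hk) _,
    ← Real.finsetProd_rpow s _ fun k hk => Real.rpow_nonneg (hy k hk) _, ← prod_mul_distrib]
  refine prod_le_prod (fun k hk => by have := hx k hk; have := hy k hk; positivity)
    fun k hk => ?_
  have hx := hx k hk
  have hy := hy k hk
  calc (v k (x k) ^ b k) ^ (1 - t) * (v k (y k) ^ b k) ^ t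
      = (v k (x k) ^ (1 - t) * v k (y k) ^ t) ^ b k := by
        rw [Real.mul_rpow (by positivity) (by positivity), ← Real.rpow_mul hx,
          ← Real.rpow_mul hy, ← Real.rpow_mul hx, ← Real.rpow_mul hy, mul_comm (b k),
          mul_comm (b k)]
    _ ≤ v k ((1 - t) • x k + t • y k) ^ b k :=
        Real.rpow_le_rpow (by positivity)
          ((hv k hk).rpow_one_sub_mul_rpow_le trivial trivial hx hy ht0 ht1) (hb k hk)

theorem exp_neg_le_of_forall_one_sub_rpow_le {b r : ℝ} (hb : 0 < b) (hr : 0 < r)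
    (h : ∀ t : ℝ, 0 < t → t < 1 → (1 - t) ^ b ≤ r ^ t) : Real.exp (-b) ≤ r := by
  by_contra! hr_lt
  set L := -Real.log r
  have hbL : b < L := by
    have := Real.log_lt_log hr hr_lt
    rw [Real.log_exp] at this
    linarith
  have hL : 0 < L := hb.trans hbL
  -- `t = 1 - b / L` maximises `b * log (1 - t) + t * L`, the logarithm of `(1 - t) ^ b / r ^ t`.
  have h_at := h (1 - b / L) (by linarith [(div_lt_one hL).2 hbL]) (by linarith [div_pos hb hL])
  rw [sub_sub_cancel] at h_at
  have hlog := Real.log_le_log (by positivity) h_at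
  rw [Real.log_rpow (by positivity), Real.log_rpow hr, show Real.log r = -L by simp [L],
    show Real.log (b / L) = -Real.log (L / b) by rw [← Real.log_inv, inv_div]] at hlog
  have hLb := mul_lt_mul_of_pos_left
    (Real.log_lt_sub_one_of_pos (by positivity) ((div_eq_one_iff_eq hb.ne').not.2 hbL.ne')) hb
  have : b * (L / b - 1) = L - b := by field_simp
  have : (1 - b / L) * -L = b - L := by field_simp; ring
  linarith

section Mechanism

variable {ι α : Type*} [Fintype ι] [DecidableEq ι] {v : ι → (α → ℝ) → ℝ} {b : ι → ℝ}

theorem one_sub_rpow_le_div_rpow_of_forall_prod_le (hb : ∀ k, 0 ≤ b k)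
    (hv_hom : ∀ k (c : ℝ), 0 ≤ c → ∀ y : α → ℝ, v k (c • y) = c * v k y)
    (hv_concave : ∀ k, ConcaveOn ℝ Set.univ (v k)) {xs z : ι → α → ℝ}
    (hxs : IsFeasibleAllocation xs)
    (hxs_max : ∀ x, IsFeasibleAllocation x → ∏ k, v k (x k) ^ b k ≤ ∏ k, v k (xs k) ^ b k)
    (hz : IsFeasibleAllocation z) (i : ι) (hxs_pos : ∀ k, 0 < v k (xs k))
    (hz_pos : ∀ k ∈ univ.erase i, 0 < v k (z k)) {t : ℝ} (ht0 : 0 ≤ t) (ht1 : t < 1) :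
    (1 - t) ^ b i ≤
      ((∏ k ∈ univ.erase i, v k (xs k) ^ b k) / ∏ k ∈ univ.erase i, v k (z k) ^ b k) ^ t := by
  set P := ∏ k ∈ univ.erase i, v k (xs k) ^ b k
  set Q := ∏ k ∈ univ.erase i, v k (z k) ^ b k
  have hP : 0 < P := prod_pos fun k _ => Real.rpow_pos_of_pos (hxs_pos k) _
  have hQ : 0 < Q := prod_pos fun k hk => Real.rpow_pos_of_pos (hz_pos k hk) _
  have hV : 0 < v i (xs i) ^ b i := Real.rpow_pos_of_pos (hxs_pos i) _
  set y := (1 - t) • xs + t • Function.update z i 0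
  have hy : IsFeasibleAllocation y :=
    convex_setOf_isFeasibleAllocation hxs (hz.update_zero i) (by linarith) ht0 (by ring)
  have hy_i : v i (y i) ^ b i = (1 - t) ^ b i * v i (xs i) ^ b i := by
    simp only [y, Pi.add_apply, Pi.smul_apply, Function.update_self, smul_zero, add_zero]
    rw [hv_hom i _ (by linarith), Real.mul_rpow (by linarith) (hxs_pos i).le]
  have hy_ne : ∀ k ∈ univ.erase i, y k = (1 - t) • xs k + t • z k := fun k hk => by
    simp [y, Function.update_of_ne (ne_of_mem_erase hk)]
  have hmix : (1 - t) ^ b i * (P ^ (1 - t) * Q ^ t) ≤ P := by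
    refine le_of_mul_le_mul_left ?_ hV
    calc v i (xs i) ^ b i * ((1 - t) ^ b i * (P ^ (1 - t) * Q ^ t))
        = v i (y i) ^ b i * (P ^ (1 - t) * Q ^ t) := by rw [hy_i]; ring
      _ ≤ v i (y i) ^ b i * ∏ k ∈ univ.erase i, v k (y k) ^ b k := by
        rw [prod_congr rfl fun k hk => congrArg (fun w => v k w ^ b k) (hy_ne k hk)]
        refine mul_le_mul_of_nonneg_left ?_ (by rw [hy_i]; positivity)
        exact prod_rpow_one_sub_mul_prod_rpow_le _ (fun k _ => hv_concave k) (fun k _ => hb k)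
          (fun k _ => (hxs_pos k).le) (fun k hk => (hz_pos k hk).le) ht0 ht1.le
      _ = ∏ k, v k (y k) ^ b k := mul_prod_erase univ (fun k => v k (y k) ^ b k) (mem_univ i)
      _ ≤ ∏ k, v k (xs k) ^ b k := hxs_max y hy
      _ = v i (xs i) ^ b i * P := (mul_prod_erase univ (fun k => v k (xs k) ^ b k) (mem_univ i)).symm
  have hPt : P = P ^ (1 - t) * P ^ t := by rw [← Real.rpow_add hP]; simp
  rw [Real.div_rpow hP.le hQ.le, le_div_iff₀ (Real.rpow_pos_of_pos hQ t)]
  refine le_of_mul_le_mul_left ?_ (Real.rpow_pos_of_pos hP (1 - t))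
  linarith

end Mechanism

theorem stmt_5_general {n m : ℕ}
    (v : Fin n → (Fin m → ℝ) → ℝ) (b : Fin n → ℝ)
    (hb : ∀ k, 1 ≤ b k)
    (hv_hom : ∀ k (c : ℝ), 0 ≤ c → ∀ y : Fin m → ℝ, v k (c • y) = c * v k y)
    (hv_concave : ∀ k, ConcaveOn ℝ Set.univ (v k))
    (xstar : Fin n → Fin m → ℝ)
    (hxstar_nonneg : ∀ k j, 0 ≤ xstar k j) (hxstar_feas : ∀ j, ∑ k, xstar k j ≤ 1)
    (hxstar_max : ∀ x : Fin n → Fin m → ℝ,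
      (∀ k j, 0 ≤ x k j) → (∀ j, ∑ k, x k j ≤ 1) →
      ∏ k, v k (x k) ^ b k ≤ ∏ k, v k (xstar k) ^ b k)
    (xmi : Fin n → Fin n → Fin m → ℝ)
    (hxmi_nonneg : ∀ i k j, 0 ≤ xmi i k j) (hxmi_feas : ∀ i j, ∑ k, xmi i k j ≤ 1)
    (hpos : ∀ k, 0 < v k (xstar k))
    (hpos' : ∀ i, ∀ k ∈ univ.erase i, 0 < v k (xmi i k)) :
    ∀ i : Fin n,
      (1 / Real.exp 1) * v i (xstar i)
        ≤ v i (((((∏ k ∈ univ.erase i, v k (xstar k) ^ b k) /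
            (∏ k ∈ univ.erase i, v k (xmi i k) ^ b k)) ^ (1 / b i))) • xstar i) := by
  intro i
  have hbi : 0 < b i := one_pos.trans_le (hb i)
  set r := (∏ k ∈ univ.erase i, v k (xstar k) ^ b k) / ∏ k ∈ univ.erase i, v k (xmi i k) ^ b k
  have hr : 0 < r := div_pos (prod_pos fun k _ => Real.rpow_pos_of_pos (hpos k) _)
    (prod_pos fun k hk => Real.rpow_pos_of_pos (hpos' i k hk) _)
  have hr_ge : Real.exp (-b i) ≤ r :=
    exp_neg_le_of_forall_one_sub_rpow_le hbi hr fun t ht0 ht1 =>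
      one_sub_rpow_le_div_rpow_of_forall_prod_le (fun k => zero_le_one.trans (hb k)) hv_hom hv_concave
        ⟨hxstar_nonneg, hxstar_feas⟩ (fun x hx => hxstar_max x hx.1 hx.2)
        ⟨hxmi_nonneg i, hxmi_feas i⟩ i hpos (hpos' i) ht0.le ht1
  have hfrac : Real.exp (-1) ≤ r ^ (1 / b i) :=
    calc Real.exp (-1) = Real.exp (-b i) ^ (1 / b i) := by
          rw [← Real.exp_mul]; field_simp
      _ ≤ r ^ (1 / b i) := Real.rpow_le_rpow (Real.exp_nonneg _) hr_ge (by positivity)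
  rw [hv_hom i _ (Real.rpow_nonneg hr.le _), one_div, ← Real.exp_neg]
  exact mul_le_mul_of_nonneg_right hfrac (hpos i).le

/-- Corollary. The Partial Allocation mechanism always yields an allocation
giving every player at least a `1/e` fraction of her Proportionally Fair valuation:
`v_i(f_i • x*_i) ≥ (1/e) · v_i(x*_i)` for every player `i`. -/
theorem stmt_5 {n m : ℕ} (hn : 2 ≤ n)
    (v : Fin n → (Fin m → ℝ) → ℝ) (b : Fin n → ℝ)
    (hb : ∀ k, 1 ≤ b k)
    (hv_nonneg : ∀ k (y : Fin m → ℝ), (∀ j, 0 ≤ y j) → 0 ≤ v k y)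
    (hv_hom : ∀ k (c : ℝ), 0 ≤ c → ∀ y : Fin m → ℝ, v k (c • y) = c * v k y)
    (hv_concave : ∀ k, ConcaveOn ℝ Set.univ (v k))
    (hv_zero : ∀ k, v k 0 = 0)
    (xstar : Fin n → Fin m → ℝ)
    (hxstar_nonneg : ∀ k j, 0 ≤ xstar k j) (hxstar_feas : ∀ j, ∑ k, xstar k j ≤ 1)
    (hxstar_max : ∀ x : Fin n → Fin m → ℝ,
      (∀ k j, 0 ≤ x k j) → (∀ j, ∑ k, x k j ≤ 1) →
      ∏ k, v k (x k) ^ b k ≤ ∏ k, v k (xstar k) ^ b k)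
    (xmi : Fin n → Fin n → Fin m → ℝ)
    (hxmi_nonneg : ∀ i k j, 0 ≤ xmi i k j) (hxmi_feas : ∀ i j, ∑ k, xmi i k j ≤ 1)
    (hxmi_max : ∀ i, ∀ x : Fin n → Fin m → ℝ,
      (∀ k j, 0 ≤ x k j) → (∀ j, ∑ k, x k j ≤ 1) →
      ∏ k ∈ univ.erase i, v k (x k) ^ b k ≤ ∏ k ∈ univ.erase i, v k (xmi i k) ^ b k)
    (hpos : ∀ k, 0 < v k (xstar k))
    (hpos' : ∀ i, ∀ k ∈ univ.erase i, 0 < v k (xmi i k)) :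
    ∀ i : Fin n,
      (1 / Real.exp 1) * v i (xstar i)
        ≤ v i (((((∏ k ∈ univ.erase i, v k (xstar k) ^ b k) /
            (∏ k ∈ univ.erase i, v k (xmi i k) ^ b k)) ^ (1 / b i))) • xstar i) :=
  stmt_5_general v b hb hv_hom hv_concave xstar hxstar_nonneg hxstar_feas hxstar_max xmi hxmi_nonneg
    hxmi_feas hpos hpos'
end

section
/- Suppose all n ≥ 2 players have equal weight 1 and additive linear valuations v_k(y) = Σ_j v_{kj}·y_j with v_{kj} ≥ 0. Let x* be a feasible allocation maximizing Π_k v_k(x_k) over feasible allocations with v_k(x*_k) > 0 for all k, and for a fixed player i let x*_{-i} be a feasible allocation maximizing Π_{k≠i} v_k(x_k) with v_k((x*_{-i})_k) > 0 for all k ≠ i. Then for every player k ≠ i, v_k((x*_{-i})_k) ≥ v_k(x*_k): removing a player from a Proportionally Fair allocation does not decrease any remaining player's Proportionally Fair value. -/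
/-!
A proportionally fair allocation for a set `F` of players is an equilibrium of the Fisher market
with unit budgets (Eisenberg–Gale): the first-order conditions of the Nash product say that the
prices `p j = max_{k ∈ F} v k j / u k` are paid exactly for the items each player receives, and
that every priced item is sold out.

Compare the equilibrium `(x, p)` for all players with the equilibrium `(y, q)` after a player
leaves. Let `S` be the remaining players who lose (`u_y k < u_x k`) and `T` the priced items they
receive under `x`. Each of them spends its whole budget on `T`, so `#S ≤ p(T)`. For `j ∈ T` the
bang-per-buck of its buyer gives `p j < q j`, and no player outside `S` buys from `T` under `y`,
so `q(T) ≤ #S`. Hence `S` is empty.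
-/

open Finset Topology Matrix

theorem nonpos_of_forall_le_mul {c M x₀ : ℝ} (hx₀ : 0 < x₀)
    (h : ∀ ε ∈ Set.Ioc 0 x₀, c ≤ ε * M) : c ≤ 0 := by
  have hlim : Filter.Tendsto (fun ε : ℝ => ε * M) (𝓝[>] 0) (𝓝 0) :=
    ((continuous_id.mul continuous_const).tendsto' 0 0 (zero_mul M)).mono_left nhdsWithin_le_nhds
  exact ge_of_tendsto hlim (Filter.eventually_of_mem (Ioc_mem_nhdsGT hx₀) h)

variable {ι α : Type*}

theorem single_single_apply [DecidableEq ι] [DecidableEq α] (k : ι) (j : α) (c : ℝ) (k' : ι)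
    (l : α) : (Pi.single k (Pi.single j c) : ι → α → ℝ) k' l = if k' = k ∧ l = j then c else 0 := by
  by_cases h : k' = k
  · subst h; simp [Pi.single_apply]
  · simp [h]

theorem sum_single_apply [Fintype ι] [DecidableEq ι] [DecidableEq α] (k : ι) (j : α) (c : ℝ)
    (l : α) : ∑ k', (Pi.single k (Pi.single j c) : ι → α → ℝ) k' l = if l = j then c else 0 := by
  by_cases hl : l = j <;> simp [single_single_apply, hl]

variable [Fintype α]

def utility (v x : ι → α → ℝ) (k : ι) : ℝ := v k ⬝ᵥ x k

section utility
variable (v x y : ι → α → ℝ) (k : ι)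

theorem utility_add : utility v (x + y) k = utility v x k + utility v y k := dotProduct_add ..

theorem utility_sub : utility v (x - y) k = utility v x k - utility v y k := dotProduct_sub ..

theorem utility_single [DecidableEq ι] [DecidableEq α] (j : α) (c : ℝ) (k' : ι) :
    utility v (Pi.single k (Pi.single j c)) k' = if k' = k then v k j * c else 0 := by
  by_cases h : k' = k
  · subst h; simp [utility, dotProduct_single]
  · simp [utility, h]

end utility

/-- Prices `p` and the allocation `x` form an equilibrium of the Fisher market for the players of
`F` with unit budgets: `v k j ≤ p j * u k` says that `1 / u k` is the best bang-per-buck,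
attained on every item that `k` receives. -/
structure IsFisherEquilibrium (F : Finset ι) (v x : ι → α → ℝ) (p : α → ℝ) : Prop where
  alloc_nonneg : ∀ k ∈ F, ∀ j, 0 ≤ x k j
  sum_le_one : ∀ j, ∑ k ∈ F, x k j ≤ 1
  price_nonneg : ∀ j, 0 ≤ p j
  utility_pos : ∀ k ∈ F, 0 < utility v x k
  le_price_mul : ∀ k ∈ F, ∀ j, v k j ≤ p j * utility v x k
  eq_price_mul : ∀ k ∈ F, ∀ j, 0 < x k j → v k j = p j * utility v x k
  sum_eq_one : ∀ j, 0 < p j → ∑ k ∈ F, x k j = 1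

namespace IsFisherEquilibrium

variable {F G : Finset ι} {v x y : ι → α → ℝ} {p q : α → ℝ}

theorem sum_price_mul_eq_one (h : IsFisherEquilibrium F v x p) {k : ι} (hk : k ∈ F) :
    ∑ j, p j * x k j = 1 := by
  refine (mul_eq_right₀ (h.utility_pos k hk).ne').1 ?_
  rw [sum_mul]
  refine sum_congr rfl fun j _ => ?_
  rcases (h.alloc_nonneg k hk j).eq_or_lt with h0 | hpos
  · simp [← h0]
  · rw [h.eq_price_mul k hk j hpos]; ring

theorem card_le_sum_price (h : IsFisherEquilibrium F v x p) {S : Finset ι} (hSF : S ⊆ F)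
    {T : Finset α} (hT : ∀ k ∈ S, ∀ j, 0 < x k j → 0 < p j → j ∈ T) :
    (#S : ℝ) ≤ ∑ j ∈ T, p j := by
  have hspend : ∀ k ∈ S, ∑ j ∈ T, p j * x k j = 1 := fun k hk => by
    rw [← h.sum_price_mul_eq_one (hSF hk)]
    refine sum_subset (subset_univ T) fun j _ hj => ?_
    rcases (h.alloc_nonneg k (hSF hk) j).eq_or_lt with h0 | hx
    · simp [← h0]
    rcases (h.price_nonneg j).eq_or_lt with h0 | hp
    · simp [← h0]
    · exact absurd (hT k hk j hx hp) hj
  calc (#S : ℝ) = ∑ k ∈ S, ∑ j ∈ T, p j * x k j := by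
        rw [sum_congr rfl hspend]; simp
    _ = ∑ j ∈ T, p j * ∑ k ∈ S, x k j := by rw [sum_comm]; simp only [mul_sum]
    _ ≤ ∑ j ∈ T, p j := sum_le_sum fun j _ => mul_le_of_le_one_right (h.price_nonneg j)
        ((sum_le_sum_of_subset_of_nonneg hSF fun k hk _ => h.alloc_nonneg k hk j).trans
          (h.sum_le_one j))

theorem sum_price_le_card (h : IsFisherEquilibrium G v y q) {S : Finset ι} (hSG : S ⊆ G)
    {T : Finset α} (hq : ∀ j ∈ T, 0 < q j) (hout : ∀ k ∈ G, k ∉ S → ∀ j ∈ T, y k j = 0) :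
    ∑ j ∈ T, q j ≤ #S :=
  calc ∑ j ∈ T, q j = ∑ j ∈ T, q j * ∑ k ∈ G, y k j :=
        sum_congr rfl fun j hj => by rw [h.sum_eq_one j (hq j hj), mul_one]
    _ = ∑ k ∈ S, ∑ j ∈ T, q j * y k j := by
        simp only [mul_sum]
        rw [sum_comm]
        exact (sum_subset hSG fun k hk hkS => sum_eq_zero fun j hj => by
          rw [hout k hk hkS j hj, mul_zero]).symm
    _ ≤ ∑ k ∈ S, ∑ j, q j * y k j := sum_le_sum fun k hk =>
        sum_le_sum_of_subset_of_nonneg (subset_univ T) fun j _ _ =>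
          mul_nonneg (h.price_nonneg j) (h.alloc_nonneg k (hSG hk) j)
    _ = #S := by rw [sum_congr rfl fun k hk => h.sum_price_mul_eq_one (hSG hk)]; simp

theorem utility_le_of_subset (hGF : G ⊆ F) (hx : IsFisherEquilibrium F v x p)
    (hy : IsFisherEquilibrium G v y q) {k : ι} (hk : k ∈ G) :
    utility v x k ≤ utility v y k := by
  classical
  by_contra! hlt
  set S := G.filter fun k => utility v y k < utility v x k
  set T := univ.filter fun j => ∃ k ∈ S, 0 < x k j ∧ 0 < p j
  have hSG : S ⊆ G := filter_subset _ _
  have hpq : ∀ j ∈ T, p j < q j := by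
    intro j hj
    obtain ⟨k, hkS, hxj, hpj⟩ := (mem_filter.1 hj).2
    obtain ⟨hkG, hk⟩ := mem_filter.1 hkS
    have hyk := hy.utility_pos k hkG
    refine lt_of_mul_lt_mul_right ?_ hyk.le
    calc p j * utility v y k < p j * utility v x k := mul_lt_mul_of_pos_left hk hpj
      _ = v k j := (hx.eq_price_mul k (hGF hkG) j hxj).symm
      _ ≤ q j * utility v y k := hy.le_price_mul k hkG j
  have hout : ∀ k ∈ G, k ∉ S → ∀ j ∈ T, y k j = 0 := by
    intro k hkG hkS j hj
    have hk : utility v x k ≤ utility v y k := not_lt.1 fun h => hkS (mem_filter.2 ⟨hkG, h⟩)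
    by_contra hne
    have hyj : 0 < y k j := (hy.alloc_nonneg k hkG j).lt_of_ne' hne
    refine (hpq j hj).not_ge (le_of_mul_le_mul_right ?_ (hy.utility_pos k hkG))
    calc q j * utility v y k = v k j := (hy.eq_price_mul k hkG j hyj).symm
      _ ≤ p j * utility v x k := hx.le_price_mul k (hGF hkG) j
      _ ≤ p j * utility v y k := mul_le_mul_of_nonneg_left hk (hx.price_nonneg j)
  have hST : (#S : ℝ) ≤ ∑ j ∈ T, p j := hx.card_le_sum_price (hSG.trans hGF)
    fun k hk j hxj hpj => mem_filter.2 ⟨mem_univ j, k, hk, hxj, hpj⟩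
  have hTS := hy.sum_price_le_card hSG (fun j hj => (hx.price_nonneg j).trans_lt (hpq j hj)) hout
  have hS : (0 : ℝ) < #S := by exact_mod_cast card_pos.2 ⟨k, mem_filter.2 ⟨hk, hlt⟩⟩
  have hT : T.Nonempty := nonempty_of_sum_ne_zero (by linarith : ∑ j ∈ T, p j ≠ 0)
  linarith [sum_lt_sum_of_nonempty hT hpq]

end IsFisherEquilibrium

variable [Fintype ι]

def IsFeasible (x : ι → α → ℝ) : Prop := (∀ k j, 0 ≤ x k j) ∧ ∀ j, ∑ k, x k j ≤ 1

/-- Only the players of `F` enter the Nash product; the others may still hold goods. -/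
structure IsPropFair (F : Finset ι) (v x : ι → α → ℝ) : Prop where
  feasible : IsFeasible x
  utility_pos : ∀ k ∈ F, 0 < utility v x k
  prod_le : ∀ z, IsFeasible z → ∏ k ∈ F, utility v z k ≤ ∏ k ∈ F, utility v x k

namespace IsPropFair

variable {F : Finset ι} {v x : ι → α → ℝ}

theorem prod_le_of_eq_outside (h : IsPropFair F v x) {z : ι → α → ℝ} (hz : IsFeasible z)
    {s : Finset ι} (hs : s ⊆ F) (heq : ∀ k ∈ F, k ∉ s → utility v z k = utility v x k) :
    ∏ k ∈ s, utility v z k ≤ ∏ k ∈ s, utility v x k := by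
  classical
  have hrest : 0 < ∏ k ∈ F \ s, utility v x k :=
    prod_pos fun k hk => h.utility_pos k (sdiff_subset hk)
  have := h.prod_le z hz
  rw [← prod_sdiff hs, ← prod_sdiff hs (f := utility v x),
    prod_congr rfl fun k hk => heq k (mem_sdiff.1 hk).1 (mem_sdiff.1 hk).2] at this
  exact le_of_mul_le_mul_left this hrest

theorem mul_utility_le (h : IsPropFair F v x) {k k' : ι} (hk : k ∈ F) (hk' : k' ∈ F) {j : α}
    (hxj : 0 < x k' j) :
    v k j * utility v x k' ≤ v k' j * utility v x k := by
  classical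
  rcases eq_or_ne k k' with rfl | hkk'
  · rfl
  suffices v k j * utility v x k' - v k' j * utility v x k ≤ 0 by linarith
  -- Shifting `ε` of item `j` from `k'` to `k` cannot raise the Nash product; let `ε → 0`.
  refine nonpos_of_forall_le_mul (M := v k j * v k' j) hxj fun ε ⟨hε, hεx⟩ => ?_
  set z := x + Pi.single k (Pi.single j ε) - Pi.single k' (Pi.single j ε)
  have hutil : ∀ k'', utility v z k'' = utility v x k'' + (if k'' = k then v k j * ε else 0)
      - (if k'' = k' then v k' j * ε else 0) := by
    intro k''
    simp only [z, utility_add, utility_sub, utility_single]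
  have hz : IsFeasible z := by
    refine ⟨fun k'' l => ?_, fun l => ?_⟩
    · simp only [z, Pi.sub_apply, Pi.add_apply, single_single_apply]
      have := h.feasible.1 k'' l
      split_ifs with h₁ h₂ h₂ <;> try linarith
      obtain ⟨rfl, rfl⟩ := h₂
      linarith
    · simpa [z, sum_sub_distrib, sum_add_distrib, sum_single_apply] using h.feasible.2 l
  have hpair := h.prod_le_of_eq_outside hz (insert_subset hk (singleton_subset_iff.2 hk'))
    fun k'' _ hk'' => by
      simp only [mem_insert, mem_singleton, not_or] at hk''
      simp [hutil, hk''.1, hk''.2]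
  rw [prod_pair hkk', prod_pair hkk', hutil, hutil] at hpair
  simp only [↓reduceIte, if_neg hkk', if_neg (Ne.symm hkk'), add_zero, sub_zero] at hpair
  have : ε * (v k j * utility v x k' - v k' j * utility v x k - ε * (v k j * v k' j)) ≤ 0 := by
    linarith
  linarith [nonpos_of_mul_nonpos_right this hε]

theorem nonpos_of_sum_lt_one (h : IsPropFair F v x) {k : ι} (hk : k ∈ F) {j : α}
    (hj : ∑ k' ∈ F, x k' j < 1) : v k j ≤ 0 := by
  classical
  -- Give the part of `j` not held by `F` to `k`, taking it from the players outside `F`.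
  set s := 1 - ∑ k' ∈ F, x k' j
  set z := (fun k'' l => if k'' ∈ F then x k'' l else 0) + Pi.single k (Pi.single j s)
  have hutil : ∀ k'' ∈ F,
      utility v z k'' = utility v x k'' + (if k'' = k then v k j * s else 0) := by
    intro k'' hk''
    simp only [z, utility_add, utility_single]
    simp [utility, hk'']
  have hz : IsFeasible z := by
    refine ⟨fun k'' l => ?_, fun l => ?_⟩
    · simp only [z, Pi.add_apply, single_single_apply]
      have := h.feasible.1 k'' l
      split_ifs <;> linarith
    · simp only [z, Pi.add_apply, sum_add_distrib, sum_single_apply, sum_ite_mem, univ_inter]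
      split_ifs with hl
      · subst hl; linarith
      · simpa using (sum_le_sum_of_subset_of_nonneg (subset_univ F)
          fun k'' _ _ => h.feasible.1 k'' l).trans (h.feasible.2 l)
  have := h.prod_le_of_eq_outside hz (singleton_subset_iff.2 hk) fun k'' hF hne => by
    simp [hutil k'' hF, notMem_singleton.1 hne]
  rw [prod_singleton, prod_singleton, hutil k hk, if_pos rfl] at this
  nlinarith

end IsPropFair

theorem IsPropFair.isFisherEquilibrium {F : Finset ι} {v x : ι → α → ℝ} (h : IsPropFair F v x)
    (hv : ∀ k j, 0 ≤ v k j) (hF : F.Nonempty) :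
    IsFisherEquilibrium F v x fun j => F.sup' hF fun k => v k j / utility v x k := by
  have le_price : ∀ k ∈ F, ∀ j, v k j / utility v x k ≤ F.sup' hF fun k => v k j / utility v x k :=
    fun k hk j => le_sup' (fun k => v k j / utility v x k) hk
  refine ⟨fun k _ => h.feasible.1 k, fun j => ?_, fun j => ?_, h.utility_pos, fun k hk j => ?_,
    fun k hk j hxj => ?_, fun j hj => ?_⟩
  · exact (sum_le_sum_of_subset_of_nonneg (subset_univ F) fun k _ _ => h.feasible.1 k j).trans
      (h.feasible.2 j)
  · obtain ⟨k, hk⟩ := hF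
    exact (div_nonneg (hv k j) (h.utility_pos k hk).le).trans (le_price k hk j)
  · exact (div_le_iff₀ (h.utility_pos k hk)).1 (le_price k hk j)
  · refine le_antisymm ((div_le_iff₀ (h.utility_pos k hk)).1 (le_price k hk j)) ?_
    refine (le_div_iff₀ (h.utility_pos k hk)).1 (sup'_le hF _ fun k' hk' => ?_)
    rw [div_le_div_iff₀ (h.utility_pos k' hk') (h.utility_pos k hk)]
    exact h.mul_utility_le hk' hk hxj
  · refine le_antisymm ((sum_le_sum_of_subset_of_nonneg (subset_univ F)
      fun k _ _ => h.feasible.1 k j).trans (h.feasible.2 j)) (not_lt.1 fun hlt => hj.not_ge ?_)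
    exact sup'_le hF _ fun k hk =>
      div_nonpos_of_nonpos_of_nonneg (h.nonpos_of_sum_lt_one hk hlt) (h.utility_pos k hk).le

theorem IsPropFair.utility_le_of_subset {F G : Finset ι} {v x y : ι → α → ℝ}
    (hv : ∀ k j, 0 ≤ v k j) (hGF : G ⊆ F) (hx : IsPropFair F v x) (hy : IsPropFair G v y) {k : ι}
    (hk : k ∈ G) : utility v x k ≤ utility v y k :=
  (hx.isFisherEquilibrium hv ⟨k, hGF hk⟩).utility_le_of_subset hGF
    (hy.isFisherEquilibrium hv ⟨k, hk⟩) hk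

theorem stmt_10_general {n m : ℕ} (i : Fin n)
    (vv : Fin n → Fin m → ℝ) (hvv : ∀ k l, 0 ≤ vv k l)
    (xstar : Fin n → Fin m → ℝ)
    (hxstar_nonneg : ∀ k l, 0 ≤ xstar k l) (hxstar_feas : ∀ l, ∑ k, xstar k l ≤ 1)
    (hxstar_max : ∀ x : Fin n → Fin m → ℝ,
      (∀ k l, 0 ≤ x k l) → (∀ l, ∑ k, x k l ≤ 1) →
      ∏ k, (∑ l, vv k l * x k l) ≤ ∏ k, (∑ l, vv k l * xstar k l))
    (hpos : ∀ k, 0 < ∑ l, vv k l * xstar k l)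
    (xmi : Fin n → Fin m → ℝ)
    (hxmi_nonneg : ∀ k l, 0 ≤ xmi k l) (hxmi_feas : ∀ l, ∑ k, xmi k l ≤ 1)
    (hxmi_max : ∀ x : Fin n → Fin m → ℝ,
      (∀ k l, 0 ≤ x k l) → (∀ l, ∑ k, x k l ≤ 1) →
      ∏ k ∈ univ.erase i, (∑ l, vv k l * x k l)
        ≤ ∏ k ∈ univ.erase i, (∑ l, vv k l * xmi k l))
    (hpos' : ∀ k ∈ univ.erase i, 0 < ∑ l, vv k l * xmi k l) :
    ∀ k, k ≠ i → ∑ l, vv k l * xstar k l ≤ ∑ l, vv k l * xmi k l := by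
  have hxstar : IsPropFair univ vv xstar :=
    ⟨⟨hxstar_nonneg, hxstar_feas⟩, fun k _ => hpos k, fun z hz => hxstar_max z hz.1 hz.2⟩
  have hxmi : IsPropFair (univ.erase i) vv xmi :=
    ⟨⟨hxmi_nonneg, hxmi_feas⟩, hpos', fun z hz => hxmi_max z hz.1 hz.2⟩
  exact fun k hk =>
    hxstar.utility_le_of_subset hvv (erase_subset i univ) hxmi (mem_erase.2 ⟨hk, mem_univ k⟩)

/-- For additive linear valuations (equal weights), removing a player from a
Proportionally Fair allocation does not decrease any remaining player's Proportionally Fair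
value: `v_k((x*_{-i})_k) ≥ v_k(x*_k)` for all `k ≠ i`. -/
theorem stmt_10 {n m : ℕ} (hn : 2 ≤ n) (i : Fin n)
    (vv : Fin n → Fin m → ℝ) (hvv : ∀ k l, 0 ≤ vv k l)
    (xstar : Fin n → Fin m → ℝ)
    (hxstar_nonneg : ∀ k l, 0 ≤ xstar k l) (hxstar_feas : ∀ l, ∑ k, xstar k l ≤ 1)
    (hxstar_max : ∀ x : Fin n → Fin m → ℝ,
      (∀ k l, 0 ≤ x k l) → (∀ l, ∑ k, x k l ≤ 1) →
      ∏ k, (∑ l, vv k l * x k l) ≤ ∏ k, (∑ l, vv k l * xstar k l))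
    (hpos : ∀ k, 0 < ∑ l, vv k l * xstar k l)
    (xmi : Fin n → Fin m → ℝ)
    (hxmi_nonneg : ∀ k l, 0 ≤ xmi k l) (hxmi_feas : ∀ l, ∑ k, xmi k l ≤ 1)
    (hxmi_max : ∀ x : Fin n → Fin m → ℝ,
      (∀ k l, 0 ≤ x k l) → (∀ l, ∑ k, x k l ≤ 1) →
      ∏ k ∈ univ.erase i, (∑ l, vv k l * x k l)
        ≤ ∏ k ∈ univ.erase i, (∑ l, vv k l * xmi k l))
    (hpos' : ∀ k ∈ univ.erase i, 0 < ∑ l, vv k l * xmi k l) :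
    ∀ k, k ≠ i → ∑ l, vv k l * xstar k l ≤ ∑ l, vv k l * xmi k l :=
  stmt_10_general i vv hvv xstar hxstar_nonneg hxstar_feas hxstar_max hpos xmi hxmi_nonneg hxmi_feas
    hxmi_max hpos'
end

section
/- Fix ε with 0 ≤ ε < 1 and a player i with true valuation v_i; let v̄_k (k ≠ i) be the other players' reported valuations. Let x* be a feasible allocation maximizing v_i(x_i)^{b_i}·Π_{k≠i} v̄_k(x_k)^{b_k}, let x*_{-i} be a feasible allocation maximizing Π_{k≠i} v̄_k(x_k)^{b_k}, assume all values v_i(x*_i), v̄_k(x*_k), v̄_k((x*_{-i})_k) (k ≠ i) are positive, and set f_i = (Π_{k≠i} v̄_k(x*_k)^{b_k} / Π_{k≠i} v̄_k((x*_{-i})_k)^{b_k})^{1/b_i}. Let x̃ be ANY feasible allocation (e.g. the approximate Proportionally Fair allocation computed after player i misreports), and let x̃_{-i} be any feasible allocation with Π_{k≠i} v̄_k((x̃_{-i})_k)^{b_k} ≥ (1−ε)·Π_{k≠i} v̄_k((x*_{-i})_k)^{b_k}, and define f̃_i = min{1, (Π_{k≠i} v̄_k(x̃_k)^{b_k} /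 Π_{k≠i} v̄_k((x̃_{-i})_k)^{b_k})^{1/b_i}}. Then f̃_i·v_i(x̃_i) ≤ (1−ε)^{−1}·f_i·v_i(x*_i); consequently, under the adapted Partial Allocation mechanism using (1−ε)-approximate Proportionally Fair computations, a player who misreports her preferences can increase her valuation by at most a factor (1−ε)^{−2} over truthful reporting. -/
/-!
Write `A, B, C, D` for the others' weighted products at `x*`, `x*_{-i}`, `x̃`, `x̃_{-i}`, and
`β = b_i`. Optimality of `x*` tested on `x̃` gives `v_i(x̃_i)^β · C ≤ v_i(x*_i)^β · A`, and
`D ≥ (1 - ε) B`. Hence `(C / D) · v_i(x̃_i)^β ≤ (1 - ε)⁻¹ (A / B) · v_i(x*_i)^β`; taking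
`β`-th roots costs only `(1 - ε)^{-1/β} ≤ (1 - ε)⁻¹`, as `β ≥ 1`.
-/

open Finset

lemma mul_rpow_rpow_inv {x y β : ℝ} (hx : 0 ≤ x) (hy : 0 ≤ y) (hβ : β ≠ 0) :
    (x * y ^ β) ^ β⁻¹ = x ^ β⁻¹ * y := by
  rw [Real.mul_rpow hx (Real.rpow_nonneg hy _), Real.rpow_rpow_inv hy hβ]

lemma min_one_rpow_mul_le_of_rpow_mul_le {β ε A B C D s t : ℝ} (hβ : 1 ≤ β) (hε0 : 0 ≤ ε)
    (hε1 : ε < 1) (hA : 0 ≤ A) (hB : 0 < B) (hC : 0 ≤ C) (ht : 0 ≤ t) (hs : 0 ≤ s)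
    (hkey : t ^ β * C ≤ s ^ β * A) (hD : (1 - ε) * B ≤ D) :
    min 1 ((C / D) ^ (1 / β)) * t ≤ (1 - ε)⁻¹ * ((A / B) ^ (1 / β) * s) := by
  have hβ0 : β ≠ 0 := by positivity
  have hε : 0 < 1 - ε := by linarith
  have hDpos : 0 < D := lt_of_lt_of_le (by positivity) hD
  have hratio : C / D * t ^ β ≤ ((1 - ε)⁻¹ * (A / B)) * s ^ β :=
    calc C / D * t ^ β = t ^ β * C / D := by ring
      _ ≤ s ^ β * A / ((1 - ε) * B) := div_le_div₀ (by positivity) hkey (by positivity) hD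
      _ = ((1 - ε)⁻¹ * (A / B)) * s ^ β := by field_simp
  have hroot : ((1 - ε)⁻¹) ^ β⁻¹ ≤ (1 - ε)⁻¹ :=
    Real.rpow_le_self_of_one_le ((one_le_inv₀ hε).2 (by linarith)) (inv_le_one_of_one_le₀ hβ)
  rw [one_div]
  calc min 1 ((C / D) ^ β⁻¹) * t ≤ (C / D) ^ β⁻¹ * t :=
        mul_le_mul_of_nonneg_right (min_le_right _ _) ht
    _ = (C / D * t ^ β) ^ β⁻¹ := (mul_rpow_rpow_inv (by positivity) ht hβ0).symm
    _ ≤ (((1 - ε)⁻¹ * (A / B)) * s ^ β) ^ β⁻¹ :=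
        Real.rpow_le_rpow (by positivity) hratio (by positivity)
    _ = ((1 - ε)⁻¹) ^ β⁻¹ * ((A / B) ^ β⁻¹ * s) := by
        rw [mul_rpow_rpow_inv (by positivity) hs hβ0, Real.mul_rpow (by positivity) (by positivity),
          mul_assoc]
    _ ≤ (1 - ε)⁻¹ * ((A / B) ^ β⁻¹ * s) :=
        mul_le_mul_of_nonneg_right hroot (by positivity)

theorem stmt_12_general {n m : ℕ} (i : Fin n)
    (ε : ℝ) (hε0 : 0 ≤ ε) (hε1 : ε < 1)
    (b : Fin n → ℝ) (hb : ∀ k, 1 ≤ b k)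
    (vtrue : (Fin m → ℝ) → ℝ)
    (vbar : Fin n → (Fin m → ℝ) → ℝ)
    (hvtrue_nonneg : ∀ y : Fin m → ℝ, (∀ j, 0 ≤ y j) → 0 ≤ vtrue y)
    (hvbar_nonneg : ∀ k, k ≠ i → ∀ y : Fin m → ℝ, (∀ j, 0 ≤ y j) → 0 ≤ vbar k y)
    -- x* : exact PF allocation w.r.t. player i's true valuation and the others' reports
    (xstar : Fin n → Fin m → ℝ)
    (hxstar_max : ∀ x : Fin n → Fin m → ℝ,
      (∀ k j, 0 ≤ x k j) → (∀ j, ∑ k, x k j ≤ 1) →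
      vtrue (x i) ^ b i * ∏ k ∈ univ.erase i, vbar k (x k) ^ b k
        ≤ vtrue (xstar i) ^ b i * ∏ k ∈ univ.erase i, vbar k (xstar k) ^ b k)
    -- x*_{-i} : exact PF allocation in player i's absence
    (xmi : Fin n → Fin m → ℝ)
    (hvi_pos : 0 < vtrue (xstar i))
    (hpos : ∀ k ∈ univ.erase i, 0 < vbar k (xstar k))
    (hpos' : ∀ k ∈ univ.erase i, 0 < vbar k (xmi k))
    -- x̃ : ANY feasible allocation (e.g. computed after player i misreports)
    (xt : Fin n → Fin m → ℝ)
    (hxt_nonneg : ∀ k j, 0 ≤ xt k j) (hxt_feas : ∀ j, ∑ k, xt k j ≤ 1)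
    -- x̃_{-i} : approximate PF allocation in player i's absence
    (xtmi : Fin n → Fin m → ℝ)
    (hxtmi_approx : (1 - ε) * ∏ k ∈ univ.erase i, vbar k (xmi k) ^ b k
        ≤ ∏ k ∈ univ.erase i, vbar k (xtmi k) ^ b k) :
    (min 1 (((∏ k ∈ univ.erase i, vbar k (xt k) ^ b k) /
        (∏ k ∈ univ.erase i, vbar k (xtmi k) ^ b k)) ^ (1 / b i))) * vtrue (xt i)
      ≤ (1 - ε)⁻¹ * ((((∏ k ∈ univ.erase i, vbar k (xstar k) ^ b k) /
          (∏ k ∈ univ.erase i, vbar k (xmi k) ^ b k)) ^ (1 / b i)) * vtrue (xstar i)) := by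
  exact min_one_rpow_mul_le_of_rpow_mul_le (hb i) hε0 hε1
    (prod_nonneg fun k hk => (Real.rpow_pos_of_pos (hpos k hk) _).le)
    (prod_pos fun k hk => Real.rpow_pos_of_pos (hpos' k hk) _)
    (prod_nonneg fun k hk =>
      Real.rpow_nonneg (hvbar_nonneg k (ne_of_mem_erase hk) _ (hxt_nonneg k)) _)
    (hvtrue_nonneg _ (hxt_nonneg i)) hvi_pos.le
    (hxstar_max xt hxt_nonneg hxt_feas) hxtmi_approx

/-- robustness of truthfulness. Under the adapted Partial Allocation
mechanism with `(1−ε)`-approximate Proportionally Fair computations, no (possibly untruthful)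
outcome can give player `i` more than `(1−ε)⁻¹` times `f_i·v_i(x*_i)`; consequently
misreporting can increase her valuation by at most a factor `(1−ε)⁻²`. -/
theorem stmt_12 {n m : ℕ} (hn : 2 ≤ n) (i : Fin n)
    (ε : ℝ) (hε0 : 0 ≤ ε) (hε1 : ε < 1)
    (b : Fin n → ℝ) (hb : ∀ k, 1 ≤ b k)
    (vtrue : (Fin m → ℝ) → ℝ)
    (vbar : Fin n → (Fin m → ℝ) → ℝ)
    (hvtrue_nonneg : ∀ y : Fin m → ℝ, (∀ j, 0 ≤ y j) → 0 ≤ vtrue y)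
    (hvtrue_hom : ∀ c : ℝ, 0 ≤ c → ∀ y : Fin m → ℝ, vtrue (c • y) = c * vtrue y)
    (hvbar_nonneg : ∀ k, k ≠ i → ∀ y : Fin m → ℝ, (∀ j, 0 ≤ y j) → 0 ≤ vbar k y)
    (hvbar_hom : ∀ k, k ≠ i → ∀ c : ℝ, 0 ≤ c → ∀ y : Fin m → ℝ, vbar k (c • y) = c * vbar k y)
    -- x* : exact PF allocation w.r.t. player i's true valuation and the others' reports
    (xstar : Fin n → Fin m → ℝ)
    (hxstar_nonneg : ∀ k j, 0 ≤ xstar k j) (hxstar_feas : ∀ j, ∑ k, xstar k j ≤ 1)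
    (hxstar_max : ∀ x : Fin n → Fin m → ℝ,
      (∀ k j, 0 ≤ x k j) → (∀ j, ∑ k, x k j ≤ 1) →
      vtrue (x i) ^ b i * ∏ k ∈ univ.erase i, vbar k (x k) ^ b k
        ≤ vtrue (xstar i) ^ b i * ∏ k ∈ univ.erase i, vbar k (xstar k) ^ b k)
    -- x*_{-i} : exact PF allocation in player i's absence
    (xmi : Fin n → Fin m → ℝ)
    (hxmi_nonneg : ∀ k j, 0 ≤ xmi k j) (hxmi_feas : ∀ j, ∑ k, xmi k j ≤ 1)
    (hxmi_max : ∀ x : Fin n → Fin m → ℝ,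
      (∀ k j, 0 ≤ x k j) → (∀ j, ∑ k, x k j ≤ 1) →
      ∏ k ∈ univ.erase i, vbar k (x k) ^ b k ≤ ∏ k ∈ univ.erase i, vbar k (xmi k) ^ b k)
    (hvi_pos : 0 < vtrue (xstar i))
    (hpos : ∀ k ∈ univ.erase i, 0 < vbar k (xstar k))
    (hpos' : ∀ k ∈ univ.erase i, 0 < vbar k (xmi k))
    -- x̃ : ANY feasible allocation (e.g. computed after player i misreports)
    (xt : Fin n → Fin m → ℝ)
    (hxt_nonneg : ∀ k j, 0 ≤ xt k j) (hxt_feas : ∀ j, ∑ k, xt k j ≤ 1)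
    -- x̃_{-i} : approximate PF allocation in player i's absence
    (xtmi : Fin n → Fin m → ℝ)
    (hxtmi_nonneg : ∀ k j, 0 ≤ xtmi k j) (hxtmi_feas : ∀ j, ∑ k, xtmi k j ≤ 1)
    (hxtmi_approx : (1 - ε) * ∏ k ∈ univ.erase i, vbar k (xmi k) ^ b k
        ≤ ∏ k ∈ univ.erase i, vbar k (xtmi k) ^ b k) :
    (min 1 (((∏ k ∈ univ.erase i, vbar k (xt k) ^ b k) /
        (∏ k ∈ univ.erase i, vbar k (xtmi k) ^ b k)) ^ (1 / b i))) * vtrue (xt i)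
      ≤ (1 - ε)⁻¹ * ((((∏ k ∈ univ.erase i, vbar k (xstar k) ^ b k) /
          (∏ k ∈ univ.erase i, vbar k (xmi k) ^ b k)) ^ (1 / b i)) * vtrue (xstar i)) :=
  stmt_12_general i ε hε0 hε1 b hb vtrue vbar hvtrue_nonneg hvbar_nonneg xstar hxstar_max xmi
    hvi_pos hpos hpos' xt hxt_nonneg hxt_feas xtmi hxtmi_approx
end

section
/- Suppose each player k has a valuation v_k : ℝ^m → ℝ that is concave, nonnegative on nonnegative bundles, homogeneous of degree one, and normalized so that v_k(𝟙) = 1 where 𝟙 is the bundle consisting of all of every item. Let B = Σ_k b_k, and let x* be a feasible allocation maximizing Π_k v_k(x_k)^{b_k} over all feasible allocations. Then for every player i, v_i(x*_i) ≥ b_i/B; consequently Π_k v_k(x*_k)^{b_k} ≥ Π_k (b_k/B)^{b_k}. -/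
open Finset

private lemma aux_le_zero {A C e0 : ℝ} (he0 : 0 < e0) (hC : 0 ≤ C)
    (h : ∀ ε : ℝ, 0 < ε → ε ≤ e0 → A ≤ ε * C) : A ≤ 0 := by
  by_contra hA
  push_neg at hA
  have hεpos : 0 < min e0 (A / (C + 1)) :=
    lt_min he0 (div_pos hA (by linarith))
  have h1 : A ≤ min e0 (A / (C + 1)) * C := h _ hεpos (min_le_left _ _)
  have h2 : min e0 (A / (C + 1)) ≤ A / (C + 1) := min_le_right _ _
  have h3 : min e0 (A / (C + 1)) * C ≤ A / (C + 1) * C :=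
    mul_le_mul_of_nonneg_right h2 hC
  have h4 : A / (C + 1) * C < A := by
    rw [div_mul_eq_mul_div, div_lt_iff₀ (by linarith : (0:ℝ) < C + 1)]
    nlinarith
  linarith

set_option maxHeartbeats 1000000 in
/-- With concave, homogeneous valuations normalized so that the value of the
full bundle is `1`, every player's Proportionally Fair value is at least her budget share
`b_i/B`, and hence the optimal Nash product is at least `∏ (b_k/B)^{b_k}`. -/
theorem stmt_13 {n m : ℕ}
    (v : Fin n → (Fin m → ℝ) → ℝ) (b : Fin n → ℝ)
    (hb : ∀ k, 1 ≤ b k)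
    (hv_nonneg : ∀ k (y : Fin m → ℝ), (∀ j, 0 ≤ y j) → 0 ≤ v k y)
    (hv_hom : ∀ k (c : ℝ), 0 ≤ c → ∀ y : Fin m → ℝ, v k (c • y) = c * v k y)
    (hv_concave : ∀ k, ConcaveOn ℝ Set.univ (v k))
    (hv_norm : ∀ k, v k (fun _ => (1 : ℝ)) = 1)
    (xstar : Fin n → Fin m → ℝ)
    (hxstar_nonneg : ∀ k j, 0 ≤ xstar k j) (hxstar_feas : ∀ j, ∑ k, xstar k j ≤ 1)
    (hxstar_max : ∀ x : Fin n → Fin m → ℝ,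
      (∀ k j, 0 ≤ x k j) → (∀ j, ∑ k, x k j ≤ 1) →
      ∏ k, v k (x k) ^ b k ≤ ∏ k, v k (xstar k) ^ b k) :
    (∀ i, b i / (∑ k, b k) ≤ v i (xstar i)) ∧
    ∏ k, (b k / ∑ l, b l) ^ b k ≤ ∏ k, v k (xstar k) ^ b k := by
  classical
  set B : ℝ := ∑ k, b k with hBdef
  set s : Fin n → ℝ := fun k => v k (xstar k) with hsdef
  have hb0 : ∀ k, (0:ℝ) < b k := fun k => lt_of_lt_of_le one_pos (hb k)
  have hBk : ∀ k : Fin n, b k ≤ B :=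
    fun k => Finset.single_le_sum (fun l _ => (hb0 l).le) (mem_univ k)
  have hBposk : ∀ _ : Fin n, 0 < B := fun k => lt_of_lt_of_le (hb0 k) (hBk k)
  have hs_nonneg : ∀ k, 0 ≤ s k := fun k => hv_nonneg k _ (hxstar_nonneg k)
  -- Part 2: compare with the proportional allocation
  have hsum_div : ∑ k, b k / B ≤ 1 := by
    rcases isEmpty_or_nonempty (Fin n) with h | h
    · simp
    · have hB : 0 < B := hBposk (Classical.arbitrary (Fin n))
      rw [← Finset.sum_div, ← hBdef, div_self (ne_of_gt hB)]
  have hval : ∀ k, v k ((b k / B) • (fun _ : Fin m => (1:ℝ))) = b k / B := by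
    intro k
    have hk0 : 0 ≤ b k / B := div_nonneg (hb0 k).le (hBposk k).le
    rw [hv_hom k _ hk0, hv_norm, mul_one]
  have hpart2 : ∏ k, (b k / B) ^ b k ≤ ∏ k, s k ^ b k := by
    have hmax := hxstar_max (fun k => (b k / B) • (fun _ : Fin m => (1:ℝ)))
      (fun k j => by
        have hk0 : 0 ≤ b k / B := div_nonneg (hb0 k).le (hBposk k).le
        simpa using hk0)
      (fun j => by simpa using hsum_div)
    calc ∏ k, (b k / B) ^ b k
        = ∏ k, v k ((b k / B) • (fun _ : Fin m => (1:ℝ))) ^ b k := by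
          exact (Finset.prod_congr rfl (fun k _ => by rw [hval k])).symm
      _ ≤ ∏ k, s k ^ b k := hmax
  refine ⟨?_, hpart2⟩
  intro i
  have hB : 0 < B := hBposk i
  -- positivity of each s k
  have hlow_pos : 0 < ∏ k, (b k / B) ^ b k :=
    Finset.prod_pos (fun k _ => Real.rpow_pos_of_pos (div_pos (hb0 k) hB) _)
  have hP_pos : 0 < ∏ k, s k ^ b k := lt_of_lt_of_le hlow_pos hpart2
  have hs_pos : ∀ k, 0 < s k := by
    intro k
    rcases (hs_nonneg k).lt_or_eq with h | h
    · exact h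
    · exfalso
      have hz : s k ^ b k = 0 := by
        rw [← h, Real.zero_rpow (hb0 k).ne']
      have : ∏ l, s l ^ b l = 0 := Finset.prod_eq_zero (mem_univ k) hz
      rw [this] at hP_pos; exact lt_irrefl 0 hP_pos
  -- each s k ≤ 1
  have hs_le_one : ∀ k, s k ≤ 1 := by
    intro k
    set z : Fin m → ℝ := fun j => 1 - xstar k j with hzdef
    have hz : ∀ j, 0 ≤ z j := by
      intro j
      have h1 : xstar k j ≤ ∑ l, xstar l j :=
        Finset.single_le_sum (fun l _ => hxstar_nonneg l j) (mem_univ k)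
      have := hxstar_feas j
      simp only [hzdef]
      linarith
    have hcc := (hv_concave k).2 (Set.mem_univ (xstar k)) (Set.mem_univ z)
      (by norm_num : (0:ℝ) ≤ 1/2) (by norm_num : (0:ℝ) ≤ 1/2) (by norm_num)
    have hhalf : (1/2 : ℝ) • xstar k + (1/2 : ℝ) • z = (1/2 : ℝ) • (fun _ : Fin m => (1:ℝ)) := by
      funext j
      simp only [hzdef, Pi.add_apply, Pi.smul_apply, smul_eq_mul]
      ring
    rw [hhalf, hv_hom k (1/2) (by norm_num), hv_norm k] at hcc
    have hzv : 0 ≤ v k z := hv_nonneg k z hz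
    simp only [smul_eq_mul] at hcc
    have : (1/2 : ℝ) * s k + (1/2) * v k z ≤ 1/2 * 1 := hcc
    linarith
  -- notation for player i
  set σ : ℝ := s i with hσdef
  have hσ : 0 < σ := hs_pos i
  have hσ1 : σ ≤ 1 := hs_le_one i
  set β : ℝ := b i with hβdef
  have hβ1 : 1 ≤ β := hb i
  set r : ℝ := ∑ k ∈ univ.erase i, b k with hrdef
  have hr_nonneg : 0 ≤ r := Finset.sum_nonneg (fun l _ => (hb0 l).le)
  have hrB : β + r = B := by
    rw [hβdef, hrdef, hBdef]
    exact Finset.add_sum_erase _ _ (mem_univ i)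
  have hr_cases : r = 0 ∨ 1 ≤ r := by
    rcases (univ.erase i).eq_empty_or_nonempty with h | ⟨k, hk⟩
    · left; rw [hrdef, h, Finset.sum_empty]
    · right
      calc (1:ℝ) ≤ b k := hb k
        _ ≤ r := Finset.single_le_sum (fun l _ => (hb0 l).le) hk
  -- the key inequality for all small ε
  have key : ∀ ε : ℝ, 0 < ε → ε ≤ 1/2 →
      ((1-ε) * σ + ε) ^ β * (1-ε) ^ r ≤ σ ^ β := by
    intro ε hε hε2
    have h1ε : 0 ≤ 1 - ε := by linarith
    set y : Fin n → Fin m → ℝ :=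
      fun k j => (1-ε) * xstar k j + (if k = i then ε else 0) with hydef
    have hy_nonneg : ∀ k j, 0 ≤ y k j := by
      intro k j
      have hx := hxstar_nonneg k j
      by_cases h : k = i
      · subst h
        have hy : y k j = (1-ε) * xstar k j + ε := by simp [hydef]
        rw [hy]; nlinarith
      · have hy : y k j = (1-ε) * xstar k j := by simp [hydef, h]
        rw [hy]; nlinarith
    have hy_feas : ∀ j, ∑ k, y k j ≤ 1 := by
      intro j
      have : ∑ k, y k j = (1-ε) * ∑ k, xstar k j + ε := by
        rw [hydef]
        rw [Finset.sum_add_distrib, ← Finset.mul_sum, Finset.sum_ite_eq' univ i (fun _ => ε)]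
        simp
      rw [this]
      nlinarith [mul_nonneg h1ε (by linarith [hxstar_feas j] : (0:ℝ) ≤ 1 - ∑ k, xstar k j)]
    have hmax := hxstar_max y hy_nonneg hy_feas
    -- v of the modified bundles
    have hyk : ∀ k, k ≠ i → v k (y k) = (1-ε) * s k := by
      intro k hk
      have : y k = (1-ε) • xstar k := by
        funext j; simp [hydef, hk]
      rw [this, hv_hom k _ h1ε]
    have hyi : (1-ε) * σ + ε ≤ v i (y i) := by
      have hcc := (hv_concave i).2 (Set.mem_univ (xstar i))
        (Set.mem_univ (fun _ : Fin m => (1:ℝ))) h1ε hε.le (by ring)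
      have hyieq : y i = (1-ε) • xstar i + ε • (fun _ : Fin m => (1:ℝ)) := by
        funext j; simp [hydef]
      rw [hv_norm i] at hcc
      simp only [smul_eq_mul, mul_one] at hcc
      rw [hyieq]
      exact hcc
    -- split products over i
    set Q : ℝ := ∏ k ∈ univ.erase i, s k ^ b k with hQdef
    have hQpos : 0 < Q :=
      Finset.prod_pos (fun k _ => Real.rpow_pos_of_pos (hs_pos k) _)
    have hsplitP : ∏ k, s k ^ b k = σ ^ β * Q :=
      (Finset.mul_prod_erase univ (fun k => s k ^ b k) (mem_univ i)).symm
    have hsplitY : v i (y i) ^ β * ∏ k ∈ univ.erase i, v k (y k) ^ b k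
        = ∏ k, v k (y k) ^ b k :=
      Finset.mul_prod_erase univ (fun k => v k (y k) ^ b k) (mem_univ i)
    have herase : ∏ k ∈ univ.erase i, v k (y k) ^ b k = (1-ε) ^ r * Q := by
      have h1 : ∏ k ∈ univ.erase i, v k (y k) ^ b k
          = ∏ k ∈ univ.erase i, ((1-ε) ^ b k * s k ^ b k) := by
        refine Finset.prod_congr rfl (fun k hk => ?_)
        rw [hyk k (Finset.ne_of_mem_erase hk),
          Real.mul_rpow h1ε (hs_nonneg k)]
      rw [h1, Finset.prod_mul_distrib, hQdef, hrdef,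
        Real.rpow_sum_of_nonneg h1ε (fun l _ => (hb0 l).le)]
    have hLB : ((1-ε) * σ + ε) ^ β * ((1-ε) ^ r * Q) ≤ σ ^ β * Q := by
      calc ((1-ε) * σ + ε) ^ β * ((1-ε) ^ r * Q)
          ≤ v i (y i) ^ β * ((1-ε) ^ r * Q) := by
            apply mul_le_mul_of_nonneg_right
            · exact Real.rpow_le_rpow (by nlinarith [mul_nonneg h1ε hσ.le]) hyi (by linarith)
            · positivity
        _ = v i (y i) ^ β * ∏ k ∈ univ.erase i, v k (y k) ^ b k := by rw [herase]
        _ = ∏ k, v k (y k) ^ b k := hsplitY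
        _ ≤ ∏ k, s k ^ b k := hmax
        _ = σ ^ β * Q := hsplitP
    have := le_of_mul_le_mul_right (by
      calc ((1-ε) * σ + ε) ^ β * (1-ε) ^ r * Q
          = ((1-ε) * σ + ε) ^ β * ((1-ε) ^ r * Q) := by ring
        _ ≤ σ ^ β * Q := hLB) hQpos
    exact this
  -- scalar analysis: Bernoulli estimates
  have hscalar : ∀ ε : ℝ, 0 < ε → ε ≤ 1 / (2 * (r + 1)) →
      β * (1 - σ) - r * σ ≤ ε * (β * r * (1 - σ)) := by
    intro ε hε hεle
    have hr1 : (0:ℝ) < r + 1 := by linarith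
    have hεmul : ε * (2 * (r + 1)) ≤ 1 := (le_div_iff₀ (by linarith)).mp hεle
    have hε2 : ε ≤ 1/2 := by nlinarith
    have hrε : r * ε ≤ 1/2 := by nlinarith
    have h1ε : 0 ≤ 1 - ε := by linarith
    have hkey := key ε hε hε2
    set t : ℝ := ε * (1 - σ) / σ with htdef
    have ht0 : 0 ≤ t := by
      apply div_nonneg _ hσ.le
      nlinarith
    have htσ : t * σ = ε * (1 - σ) := by
      rw [htdef]; field_simp
    -- Bernoulli for the i-th factor
    have hbase : (1-ε) * σ + ε = σ * (1 + t) := by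
      rw [htdef]; field_simp; ring
    have h1 : σ ^ β * (1 + β * t) ≤ ((1-ε) * σ + ε) ^ β := by
      rw [hbase, Real.mul_rpow hσ.le (by linarith)]
      apply mul_le_mul_of_nonneg_left
        (one_add_mul_self_le_rpow_one_add (by linarith) hβ1)
      exact (Real.rpow_pos_of_pos hσ β).le
    -- Bernoulli for the remaining factor
    have h2 : 1 - r * ε ≤ (1-ε) ^ r := by
      rcases hr_cases with h | h
      · rw [h]; simp [Real.rpow_zero]
      · have := one_add_mul_self_le_rpow_one_add (s := -ε) (by linarith) h
        have heq : (1 + -ε : ℝ) = 1 - ε := by ring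
        rw [heq] at this
        linarith
    have h1nonneg : 0 ≤ σ ^ β * (1 + β * t) := by
      have hβt : 0 ≤ β * t := mul_nonneg (by linarith) ht0
      nlinarith [Real.rpow_pos_of_pos hσ β]
    have hmul : σ ^ β * (1 + β * t) * (1 - r * ε) ≤ σ ^ β := by
      calc σ ^ β * (1 + β * t) * (1 - r * ε)
          ≤ ((1-ε) * σ + ε) ^ β * (1-ε) ^ r :=
            mul_le_mul h1 h2 (by linarith) (by positivity)
        _ ≤ σ ^ β := hkey
    have hσβ : 0 < σ ^ β := Real.rpow_pos_of_pos hσ β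
    have hred : (1 + β * t) * (1 - r * ε) ≤ 1 := by
      have h6 : σ ^ β * ((1 + β * t) * (1 - r * ε)) ≤ σ ^ β * 1 := by
        rw [mul_one]
        calc σ ^ β * ((1 + β * t) * (1 - r * ε))
            = σ ^ β * (1 + β * t) * (1 - r * ε) := by ring
          _ ≤ σ ^ β := hmul
      exact le_of_mul_le_mul_left h6 hσβ
    have h5 : σ * (1 + β * t) = σ + β * (ε * (1 - σ)) := by rw [← htσ]; ring
    have hred2 : (σ + β * (ε * (1 - σ))) * (1 - r * ε) ≤ σ := by
      calc (σ + β * (ε * (1 - σ))) * (1 - r * ε)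
          = σ * ((1 + β * t) * (1 - r * ε)) := by rw [← h5]; ring
        _ ≤ σ * 1 := mul_le_mul_of_nonneg_left hred hσ.le
        _ = σ := mul_one σ
    -- expand and divide by ε
    have hexp : ε * (β * (1 - σ) - r * σ) ≤ ε * (ε * (β * r * (1 - σ))) := by
      nlinarith [hred2]
    exact le_of_mul_le_mul_left hexp hε
  have hA : β * (1 - σ) - r * σ ≤ 0 := by
    apply aux_le_zero (e0 := 1 / (2 * (r + 1))) (by positivity) _ hscalar
    exact mul_nonneg (mul_nonneg (by linarith) hr_nonneg) (by linarith)
  have : β ≤ B * σ := by nlinarith [hrB]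
  rw [div_le_iff₀ hB]
  rw [hβdef] at this
  linarith [this]
end

section
/- Consider n bidders with nonnegative additive linear valuations v_{ij} ≥ 0 over m divisible items, and suppose (p, x*) is a competitive equilibrium with unit budgets in which every item's price is at least 1: p_j ≥ 1 for all j, x*_{ij} ≥ 0, Σ_i x*_{ij} = 1 for every item j, Σ_j x*_{ij}·p_j = 1 for every bidder i, and whenever x*_{ij} > 0 the item j maximizes bidder i's bang per buck, i.e. v_{ij}/p_j ≥ v_{il}/p_l for all items l. Then there exists an assignment σ of each bidder to a single item such that: (a) for every bidder i, σ(i) is a maximum-bang-per-buck item of i, i.e. v_{iσ(i)}/p_{σ(i)} ≥ v_{il}/p_l for all items l; and (b) for every item j, the number of bidders i with σ(i) = j is at most ⌈p_j⌉. -/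
open Finset

/-- Given a competitive equilibrium `(p, x*)` with unit budgets in which every
price is at least 1, there is an assignment of each bidder to a single maximum-bang-per-buck
item such that each item `j` receives at most `⌈p_j⌉` bidders. -/
theorem stmt_16 {n m : ℕ}
    (v : Fin n → Fin m → ℝ) (hv : ∀ i j, 0 ≤ v i j)
    (p : Fin m → ℝ) (hp : ∀ j, 1 ≤ p j)
    (xstar : Fin n → Fin m → ℝ)
    (hx_nonneg : ∀ i j, 0 ≤ xstar i j)
    (hx_alloc : ∀ j, ∑ i, xstar i j = 1)
    (hx_budget : ∀ i, ∑ j, xstar i j * p j = 1)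
    (hx_mbb : ∀ i j, 0 < xstar i j → ∀ l, v i l / p l ≤ v i j / p j) :
    ∃ σ : Fin n → Fin m,
      (∀ i, ∀ l, v i l / p l ≤ v i (σ i) / p (σ i)) ∧
      (∀ j, (({i | σ i = j} : Finset (Fin n)).card : ℝ) ≤ (⌈p j⌉ : ℝ)) := by
  classical
  -- duplicate item j into ⌈p j⌉₊ copies
  set t : Fin n → Finset ((j : Fin m) × Fin (⌈p j⌉₊)) :=
    fun i => (univ.filter fun j => 0 < xstar i j).sigma
      fun j => (univ : Finset (Fin (⌈p j⌉₊))) with ht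
  have hceil : ∀ j, ((⌈p j⌉₊ : ℝ)) = ((⌈p j⌉ : ℝ)) := by
    intro j
    rw [← Int.ceil_toNat]
    have h0 : (0:ℤ) ≤ ⌈p j⌉ := Int.ceil_nonneg (by linarith [hp j])
    exact_mod_cast congrArg (Int.cast : ℤ → ℝ) (Int.toNat_of_nonneg h0)
  -- Hall's condition
  have hall : ∀ s : Finset (Fin n), s.card ≤ (s.biUnion t).card := by
    intro s
    set J : Finset (Fin m) := s.biUnion (fun i => univ.filter fun j => 0 < xstar i j)
      with hJ
    have hbu : s.biUnion t = J.sigma fun j => (univ : Finset (Fin (⌈p j⌉₊))) := by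
      ext q
      simp only [ht, hJ, Finset.mem_biUnion, Finset.mem_sigma, Finset.mem_filter,
        Finset.mem_univ, true_and, and_true]
    have hcard : (s.biUnion t).card = ∑ j ∈ J, ⌈p j⌉₊ := by
      rw [hbu, Finset.card_sigma]
      simp
    -- real-valued counting
    have key : (s.card : ℝ) ≤ ∑ j ∈ J, (⌈p j⌉₊ : ℝ) := by
      have h1 : (s.card : ℝ) = ∑ i ∈ s, ∑ j ∈ J, xstar i j * p j := by
        have : ∀ i ∈ s, ∑ j ∈ J, xstar i j * p j = 1 := by
          intro i hi
          rw [← hx_budget i]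
          apply Finset.sum_subset (Finset.subset_univ J)
          intro j _ hjJ
          have hz : xstar i j = 0 := by
            by_contra hne
            have : 0 < xstar i j := lt_of_le_of_ne (hx_nonneg i j) (Ne.symm hne)
            exact hjJ (Finset.mem_biUnion.2 ⟨i, hi, Finset.mem_filter.2 ⟨Finset.mem_univ j, this⟩⟩)
          simp [hz]
        rw [Finset.sum_congr rfl this]
        simp
      rw [h1, Finset.sum_comm]
      apply Finset.sum_le_sum
      intro j _
      have hps : (0:ℝ) ≤ p j := by linarith [hp j]
      have hsum : ∑ i ∈ s, xstar i j ≤ 1 := by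
        rw [← hx_alloc j]
        exact Finset.sum_le_sum_of_subset_of_nonneg (Finset.subset_univ s)
          (fun i _ _ => hx_nonneg i j)
      calc ∑ i ∈ s, xstar i j * p j = (∑ i ∈ s, xstar i j) * p j := by
            rw [Finset.sum_mul]
        _ ≤ 1 * p j := by apply mul_le_mul_of_nonneg_right hsum hps
        _ = p j := one_mul _
        _ ≤ (⌈p j⌉₊ : ℝ) := Nat.le_ceil _
    rw [hcard]
    have key2 : (s.card : ℝ) ≤ ((∑ j ∈ J, ⌈p j⌉₊ : ℕ) : ℝ) := by push_cast; exact key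
    exact_mod_cast key2
  obtain ⟨f, hinj, hf⟩ := (Finset.all_card_le_biUnion_card_iff_exists_injective t).1 hall
  refine ⟨fun i => (f i).1, ?_, ?_⟩
  · intro i l
    have hfi := hf i
    simp only [ht, Finset.mem_sigma, Finset.mem_filter] at hfi
    exact hx_mbb i (f i).1 hfi.1.2 l
  · intro j
    rw [← hceil j]
    have hle : ({i | (f i).1 = j} : Finset (Fin n)).card ≤ ⌈p j⌉₊ := by
      have := Finset.card_le_card_of_injOn f
        (t := (({j} : Finset (Fin m)).sigma fun j => (univ : Finset (Fin (⌈p j⌉₊)))))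
        (fun i hi => by
          have hi' : i ∈ Finset.univ.filter (fun i => (f i).1 = j) := by
            exact_mod_cast hi
          have hfij : (f i).1 = j := (Finset.mem_filter.1 hi').2
          simp [Finset.mem_sigma, hfij])
        (hinj.injOn)
      refine this.trans ?_
      rw [Finset.card_sigma]
      simp
    exact_mod_cast hle
end

section
/- Fix a player i whose true valuation v_i is nonnegative on nonnegative bundles and homogeneous of degree d > 0, i.e. v_i(c·y) = c^d·v_i(y) for all c ≥ 0; the other players' reported valuations v̄_k (k ≠ i) are nonnegative on nonnegative bundles and homogeneous of degree one. Let x_T be a feasible allocation maximizing v_i(x_i)^{b_i}·Π_{k≠i} v̄_k(x_k)^{b_k} over feasible allocations, let x_L be a feasible allocation maximizing v̄_i(x_i)^{b_i}·Π_{k≠i} v̄_k(x_k)^{b_k} for any reported valuation v̄_i of player i, and let x*_{-i} be a feasible allocation maximizing Π_{k≠i} v̄_k(x_k)^{b_k} with D = Π_{k≠i} v̄_k((x*_{-i})_k)^{b_k} > 0. Define f_T = (Π_{k≠i} v̄_k((x_T)_k)^{b_k} / D)^{1/b_i} and f_L = (Π_{k≠i} v̄_k((x_L)_k)^{b_k}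 / D)^{1/b_i}, both of which lie in [0,1]. Then the adapted Partial Allocation mechanism, which allocates to player i the fraction f^{1/d} of her computed bundle, is truthful for player i: v_i(f_T^{1/d}·(x_T)_i) ≥ v_i(f_L^{1/d}·(x_L)_i), i.e. f_T·v_i((x_T)_i) ≥ f_L·v_i((x_L)_i). -/
open Finset

/-- The Partial Allocation mechanism adapted to a player whose true valuation
is homogeneous of degree `d > 0` (allocating her the fraction `f^{1/d}` of her computed bundle)
is truthful: the fractions `f_T, f_L` lie in `[0,1]`, and
`v_i(f_T^{1/d} • (x_T)_i) ≥ v_i(f_L^{1/d} • (x_L)_i)`, i.e.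
`f_T·v_i((x_T)_i) ≥ f_L·v_i((x_L)_i)`. -/
theorem stmt_17 {n m : ℕ} (hn : 2 ≤ n) (i : Fin n)
    (b : Fin n → ℝ) (hb : ∀ k, 1 ≤ b k)
    (d : ℝ) (hd : 0 < d)
    (vtrue vfalse : (Fin m → ℝ) → ℝ)
    (vbar : Fin n → (Fin m → ℝ) → ℝ)
    (hvtrue_nonneg : ∀ y : Fin m → ℝ, (∀ j, 0 ≤ y j) → 0 ≤ vtrue y)
    (hvtrue_hom : ∀ c : ℝ, 0 ≤ c → ∀ y : Fin m → ℝ, vtrue (c • y) = c ^ d * vtrue y)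
    (hvfalse_nonneg : ∀ y : Fin m → ℝ, (∀ j, 0 ≤ y j) → 0 ≤ vfalse y)
    (hvbar_nonneg : ∀ k, k ≠ i → ∀ y : Fin m → ℝ, (∀ j, 0 ≤ y j) → 0 ≤ vbar k y)
    (hvbar_hom : ∀ k, k ≠ i → ∀ c : ℝ, 0 ≤ c → ∀ y : Fin m → ℝ, vbar k (c • y) = c * vbar k y)
    -- x_T : PF allocation when player i reports her true valuation
    (xT : Fin n → Fin m → ℝ)
    (hxT_nonneg : ∀ k j, 0 ≤ xT k j) (hxT_feas : ∀ j, ∑ k, xT k j ≤ 1)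
    (hxT_max : ∀ x : Fin n → Fin m → ℝ,
      (∀ k j, 0 ≤ x k j) → (∀ j, ∑ k, x k j ≤ 1) →
      vtrue (x i) ^ b i * ∏ k ∈ univ.erase i, vbar k (x k) ^ b k
        ≤ vtrue (xT i) ^ b i * ∏ k ∈ univ.erase i, vbar k (xT k) ^ b k)
    -- x_L : PF allocation when player i reports a (possibly false) valuation
    (xL : Fin n → Fin m → ℝ)
    (hxL_nonneg : ∀ k j, 0 ≤ xL k j) (hxL_feas : ∀ j, ∑ k, xL k j ≤ 1)
    (hxL_max : ∀ x : Fin n → Fin m → ℝ,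
      (∀ k j, 0 ≤ x k j) → (∀ j, ∑ k, x k j ≤ 1) →
      vfalse (x i) ^ b i * ∏ k ∈ univ.erase i, vbar k (x k) ^ b k
        ≤ vfalse (xL i) ^ b i * ∏ k ∈ univ.erase i, vbar k (xL k) ^ b k)
    -- x*_{-i} : PF allocation in player i's absence
    (xmi : Fin n → Fin m → ℝ)
    (hxmi_nonneg : ∀ k j, 0 ≤ xmi k j) (hxmi_feas : ∀ j, ∑ k, xmi k j ≤ 1)
    (hxmi_max : ∀ x : Fin n → Fin m → ℝ,
      (∀ k j, 0 ≤ x k j) → (∀ j, ∑ k, x k j ≤ 1) →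
      ∏ k ∈ univ.erase i, vbar k (x k) ^ b k ≤ ∏ k ∈ univ.erase i, vbar k (xmi k) ^ b k)
    (hD : 0 < ∏ k ∈ univ.erase i, vbar k (xmi k) ^ b k) :
    (0 ≤ ((∏ k ∈ univ.erase i, vbar k (xT k) ^ b k) /
        (∏ k ∈ univ.erase i, vbar k (xmi k) ^ b k)) ^ (1 / b i) ∧
      ((∏ k ∈ univ.erase i, vbar k (xT k) ^ b k) /
        (∏ k ∈ univ.erase i, vbar k (xmi k) ^ b k)) ^ (1 / b i) ≤ 1) ∧
    (0 ≤ ((∏ k ∈ univ.erase i, vbar k (xL k) ^ b k) /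
        (∏ k ∈ univ.erase i, vbar k (xmi k) ^ b k)) ^ (1 / b i) ∧
      ((∏ k ∈ univ.erase i, vbar k (xL k) ^ b k) /
        (∏ k ∈ univ.erase i, vbar k (xmi k) ^ b k)) ^ (1 / b i) ≤ 1) ∧
    vtrue (((((∏ k ∈ univ.erase i, vbar k (xL k) ^ b k) /
        (∏ k ∈ univ.erase i, vbar k (xmi k) ^ b k)) ^ (1 / b i)) ^ (1 / d)) • xL i)
      ≤ vtrue (((((∏ k ∈ univ.erase i, vbar k (xT k) ^ b k) /
        (∏ k ∈ univ.erase i, vbar k (xmi k) ^ b k)) ^ (1 / b i)) ^ (1 / d)) • xT i) ∧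
    (((∏ k ∈ univ.erase i, vbar k (xL k) ^ b k) /
        (∏ k ∈ univ.erase i, vbar k (xmi k) ^ b k)) ^ (1 / b i)) * vtrue (xL i)
      ≤ (((∏ k ∈ univ.erase i, vbar k (xT k) ^ b k) /
        (∏ k ∈ univ.erase i, vbar k (xmi k) ^ b k)) ^ (1 / b i)) * vtrue (xT i) := by
  set D := ∏ k ∈ univ.erase i, vbar k (xmi k) ^ b k with hDdef
  set PT := ∏ k ∈ univ.erase i, vbar k (xT k) ^ b k with hPTdef
  set PL := ∏ k ∈ univ.erase i, vbar k (xL k) ^ b k with hPLdef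
  have hbi : (0:ℝ) < b i := lt_of_lt_of_le one_pos (hb i)
  have hbinv : (0:ℝ) ≤ 1 / b i := by positivity
  have hPT0 : 0 ≤ PT :=
    Finset.prod_nonneg fun k hk =>
      Real.rpow_nonneg (hvbar_nonneg k (Finset.ne_of_mem_erase hk) _ (hxT_nonneg k)) _
  have hPL0 : 0 ≤ PL :=
    Finset.prod_nonneg fun k hk =>
      Real.rpow_nonneg (hvbar_nonneg k (Finset.ne_of_mem_erase hk) _ (hxL_nonneg k)) _
  have hPTle : PT ≤ D := hxmi_max xT hxT_nonneg hxT_feas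
  have hPLle : PL ≤ D := hxmi_max xL hxL_nonneg hxL_feas
  have hvT0 : 0 ≤ vtrue (xT i) := hvtrue_nonneg _ (hxT_nonneg i)
  have hvL0 : 0 ≤ vtrue (xL i) := hvtrue_nonneg _ (hxL_nonneg i)
  have hfT0 : 0 ≤ (PT / D) ^ (1 / b i) := Real.rpow_nonneg (div_nonneg hPT0 hD.le) _
  have hfL0 : 0 ≤ (PL / D) ^ (1 / b i) := Real.rpow_nonneg (div_nonneg hPL0 hD.le) _
  have hfT1 : (PT / D) ^ (1 / b i) ≤ 1 :=
    Real.rpow_le_one (div_nonneg hPT0 hD.le) ((div_le_one hD).mpr hPTle) hbinv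
  have hfL1 : (PL / D) ^ (1 / b i) ≤ 1 :=
    Real.rpow_le_one (div_nonneg hPL0 hD.le) ((div_le_one hD).mpr hPLle) hbinv
  -- the key optimality inequality
  have key : vtrue (xL i) ^ b i * PL ≤ vtrue (xT i) ^ b i * PT :=
    hxT_max xL hxL_nonneg hxL_feas
  have key2 : PL ^ (1 / b i) * vtrue (xL i) ≤ PT ^ (1 / b i) * vtrue (xT i) := by
    have h := Real.rpow_le_rpow
      (mul_nonneg (Real.rpow_nonneg hvL0 _) hPL0) key hbinv
    have eqL : (vtrue (xL i) ^ b i * PL) ^ (1 / b i)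
        = PL ^ (1 / b i) * vtrue (xL i) := by
      rw [Real.mul_rpow (Real.rpow_nonneg hvL0 _) hPL0,
        ← Real.rpow_mul hvL0, mul_one_div_cancel hbi.ne', Real.rpow_one, mul_comm]
    have eqT : (vtrue (xT i) ^ b i * PT) ^ (1 / b i)
        = PT ^ (1 / b i) * vtrue (xT i) := by
      rw [Real.mul_rpow (Real.rpow_nonneg hvT0 _) hPT0,
        ← Real.rpow_mul hvT0, mul_one_div_cancel hbi.ne', Real.rpow_one, mul_comm]
    rw [eqL, eqT] at h
    exact h
  have main : (PL / D) ^ (1 / b i) * vtrue (xL i) ≤ (PT / D) ^ (1 / b i) * vtrue (xT i) := by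
    rw [Real.div_rpow hPL0 hD.le, Real.div_rpow hPT0 hD.le, div_mul_eq_mul_div,
      div_mul_eq_mul_div]
    exact (div_le_div_iff_of_pos_right (Real.rpow_pos_of_pos hD _)).mpr key2
  refine ⟨⟨hfT0, hfT1⟩, ⟨hfL0, hfL1⟩, ?_, main⟩
  have scaleT : vtrue ((((PT / D) ^ (1 / b i)) ^ (1 / d)) • xT i)
      = (PT / D) ^ (1 / b i) * vtrue (xT i) := by
    rw [hvtrue_hom _ (Real.rpow_nonneg hfT0 _) _,
      ← Real.rpow_mul hfT0, one_div_mul_cancel hd.ne', Real.rpow_one]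
  have scaleL : vtrue ((((PL / D) ^ (1 / b i)) ^ (1 / d)) • xL i)
      = (PL / D) ^ (1 / b i) * vtrue (xL i) := by
    rw [hvtrue_hom _ (Real.rpow_nonneg hfL0 _) _,
      ← Real.rpow_mul hfL0, one_div_mul_cancel hd.ne', Real.rpow_one]
  rw [scaleT, scaleL]
  exact main
end
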